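/- arXiv:math/0507280 — 8 statements merged into one kernel-verified Lean document; each statement's English description precedes it below -/
import Mathlib

section
/- Every 2-neighborly centrally symmetric polytope is an antipodal polytope: for every two vertices v and w of a centrally symmetric d-polytope P in which every pair of non-antipodal vertices spans an edge, there exist two distinct parallel supporting hyperplanes of P, one containing v and the other containing w. -/
/-!
If `w = -v`, a functional exposing the vertex `v` is maximized only at `v` and, by central
symmetry, minimized at `-v`. Otherwise `v` and `-w` span an edge, exposed by `f ≤ c`; symmetry makes
`-w` minimize `f` with value `-c`. The two hyperplanes `f = ±c` are distinct, since for `c = 0` the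
edge `[v, -w]` would be closed under negation, which forces `-w = -v`.
-/

open Matrix

theorem eq_neg_of_neg_mem_segment {𝕜 E : Type*} [Field 𝕜] [LinearOrder 𝕜]
    [IsStrictOrderedRing 𝕜] [AddCommGroup E] [Module 𝕜 E] {v u : E} (hv : -v ∈ segment 𝕜 v u)
    (hu : -u ∈ segment 𝕜 v u) : u = -v := by
  obtain ⟨a, b, ha, -, hab, hav⟩ := hv
  obtain ⟨a', b', -, hb', hab', hau⟩ := hu
  have key : (1 + a - a') • (v - u) = 0 := by
    linear_combination (norm := module) hav - hau - (hab - hab') • u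
  rcases smul_eq_zero.mp key with hcoef | hvu
  · have ha0 : a = 0 := by linarith
    have hb1 : b = 1 := by linarith
    subst ha0 hb1
    rwa [zero_smul, one_smul, zero_add] at hav
  · rw [sub_eq_zero] at hvu
    subst hvu
    rwa [← add_smul, hab, one_smul] at hav

theorem neg_mem_convexHull_of_forall_neg_mem {𝕜 E : Type*} [Ring 𝕜] [PartialOrder 𝕜]
    [AddCommGroup E] [Module 𝕜 E] {s : Set E} (hs : ∀ v ∈ s, -v ∈ s) {x : E}
    (hx : x ∈ convexHull 𝕜 s) : -x ∈ convexHull 𝕜 s := by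
  have hneg : -s = s := Set.Subset.antisymm (fun v hv => by simpa using hs _ hv) fun v hv => hs v hv
  rw [← hneg, convexHull_neg]
  exact Set.neg_mem_neg.mpr hx

namespace CentrallySymmetric

variable {E : Type*} [AddCommGroup E] [Module ℝ E] {P : Set E} {f : E →ₗ[ℝ] ℝ} {v u : E} {c : ℝ}

/-- The hyperplanes `f = f v` and `f = f w` are distinct parallel supporting hyperplanes of `P`,
so `v, w` form an antipodal pair. -/
def IsAntipodalWitness (P : Set E) (f : E →ₗ[ℝ] ℝ) (v w : E) : Prop :=
  (∀ x ∈ P, f x ≤ f v) ∧ (∀ x ∈ P, f w ≤ f x) ∧ f w ≠ f v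

theorem neg_le_of_le (hP : ∀ x ∈ P, -x ∈ P) (hf : ∀ x ∈ P, f x ≤ c) {x : E} (hx : x ∈ P) :
    -c ≤ f x := by
  have := hf (-x) (hP x hx)
  rw [map_neg] at this
  linarith

theorem isAntipodalWitness_neg_of_exposed (hP : ∀ x ∈ P, -x ∈ P) (hvP : v ∈ P)
    (hmax : ∀ x ∈ P, f x ≤ f v) (hexp : {x ∈ P | f x = f v} = {v}) (hv : -v ≠ v) :
    IsAntipodalWitness P f v (-v) := by
  refine ⟨hmax, fun x hx => by simpa using neg_le_of_le hP hmax hx, fun h => hv ?_⟩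
  have : -v ∈ {x ∈ P | f x = f v} := ⟨hP v hvP, h⟩
  rwa [hexp] at this

theorem isAntipodalWitness_neg_of_edge (hP : ∀ x ∈ P, -x ∈ P)
    (hmax : ∀ x ∈ P, f x ≤ c) (hedge : {x ∈ P | f x = c} = segment ℝ v u) (hvu : u ≠ -v) :
    IsAntipodalWitness P f v (-u) := by
  have hface_neg : c = 0 → ∀ x ∈ segment ℝ v u, -x ∈ segment ℝ v u := by
    rintro rfl x hx
    rw [← hedge] at hx ⊢
    exact ⟨hP x hx.1, by rw [map_neg, hx.2, neg_zero]⟩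
  have hfv : f v = c := (hedge ▸ left_mem_segment ℝ v u : v ∈ {x ∈ P | f x = c}).2
  have hfu : f u = c := (hedge ▸ right_mem_segment ℝ v u : u ∈ {x ∈ P | f x = c}).2
  have hc : c ≠ 0 := fun hc => hvu <| eq_neg_of_neg_mem_segment
    (hface_neg hc v (left_mem_segment ℝ v u)) (hface_neg hc u (right_mem_segment ℝ v u))
  refine ⟨hfv ▸ hmax, fun x hx => ?_, ?_⟩
  · rw [map_neg, hfu]
    exact neg_le_of_le hP hmax hx
  · rw [map_neg, hfu, hfv]
    exact fun h => hc (by linarith)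

end CentrallySymmetric

open CentrallySymmetric in
/-- Every 2-neighborly centrally symmetric polytope is antipodal: any two distinct
vertices lie on two distinct parallel supporting hyperplanes. -/
theorem two_neighborly_cs_polytope_is_antipodal
    (d : ℕ) (V : Finset (Fin d → ℝ)) (P : Set (Fin d → ℝ))
    (hP : P = convexHull ℝ (V : Set (Fin d → ℝ)))
    (hcs : ∀ v ∈ V, -v ∈ V)
    (hvert : ∀ v ∈ V, ∃ a : Fin d → ℝ,
      (∀ x ∈ P, ∑ i, a i * x i ≤ ∑ i, a i * v i) ∧
      {x ∈ P | ∑ i, a i * x i = ∑ i, a i * v i} = {v})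
    (hneigh : ∀ v ∈ V, ∀ w ∈ V, v ≠ w → v ≠ -w →
      ∃ a : Fin d → ℝ, ∃ c : ℝ,
        (∀ x ∈ P, ∑ i, a i * x i ≤ c) ∧
        {x ∈ P | ∑ i, a i * x i = c} = segment ℝ v w) :
    ∀ v ∈ V, ∀ w ∈ V, v ≠ w →
      ∃ a : Fin d → ℝ, a ≠ 0 ∧
        (∀ x ∈ P, ∑ i, a i * x i ≤ ∑ i, a i * v i) ∧
        (∀ x ∈ P, ∑ i, a i * w i ≤ ∑ i, a i * x i) ∧
        ∑ i, a i * w i ≠ ∑ i, a i * v i := by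
  intro v hv w hw hvw
  have hsymm : ∀ x ∈ P, -x ∈ P := hP ▸ fun x => neg_mem_convexHull_of_forall_neg_mem hcs
  suffices ∃ a, IsAntipodalWitness P (dotProductBilin ℝ ℝ a) v w by
    obtain ⟨a, hmax, hmin, hne⟩ := this
    exact ⟨a, by rintro rfl; simp at hne, hmax, hmin, hne⟩
  by_cases hwv : w = -v
  · subst hwv
    obtain ⟨a, hmax, hexp⟩ := hvert v hv
    exact ⟨a, isAntipodalWitness_neg_of_exposed hsymm (hP ▸ subset_convexHull ℝ _ hv) hmax hexp
      hvw.symm⟩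
  · obtain ⟨a, c, hmax, hedge⟩ :=
      hneigh v hv (-w) (hcs w hw) (fun h => hwv (by rw [h, neg_neg])) (by rwa [neg_neg])
    refine ⟨a, neg_neg w ▸ isAntipodalWitness_neg_of_edge (f := dotProductBilin ℝ ℝ a) hsymm hmax
      hedge fun h => hvw (neg_inj.mp h).symm⟩
end

section
/- A 2-neighborly centrally symmetric d-dimensional polytope has at most 2^d vertices. -/
open MeasureTheory ENNReal Pointwise

private noncomputable def tncsAux {d : ℕ} (a : Fin d → ℝ) : (Fin d → ℝ) →ₗ[ℝ] ℝ where
  toFun x := ∑ i, a i * x i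
  map_add' x y := by simp [mul_add, Finset.sum_add_distrib]
  map_smul' c x := by simp [Finset.mul_sum, mul_left_comm]

private lemma tncsSeg {d : ℕ} {v w : Fin d → ℝ} (hvw : v ≠ w)
    (h1 : w ∈ segment ℝ v (-w)) (h2 : -v ∈ segment ℝ v (-w)) : False := by
  obtain ⟨α, β, hα, hβ, hαβ, e1⟩ := h1
  obtain ⟨γ, δ, hγ, hδ, hγδ, e2⟩ := h2
  have e1' : α • v = (1 + β) • w := by linear_combination (norm := module) e1
  have e2' : (γ + 1) • v = δ • w := by linear_combination (norm := module) e2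
  have comb : ((γ+1)*(1+β)) • w = (α*δ) • w := by
    calc ((γ+1)*(1+β)) • w = (γ+1) • ((1+β) • w) := mul_smul _ _ _
      _ = (γ+1) • (α • v) := by rw [e1']
      _ = α • ((γ+1) • v) := smul_comm _ _ _
      _ = α • (δ • w) := by rw [e2']
      _ = (α*δ) • w := (mul_smul _ _ _).symm
  by_cases hw0 : w = 0
  · subst hw0
    rcases (by simpa using e1' : α = 0 ∨ v = 0) with hα0 | hv0
    · rcases (by simpa using e2' : γ + 1 = 0 ∨ v = 0) with hγ1 | hv0
      · linarith
      · exact hvw (by simp [hv0])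
    · exact hvw (by simp [hv0])
  · have hcoef : (γ+1)*(1+β) = α*δ := by
      have h0 : ((γ+1)*(1+β) - α*δ) • w = 0 := by rw [sub_smul, comb, sub_self]
      rcases smul_eq_zero.mp h0 with h | h
      · linarith [h]
      · exact absurd h hw0
    have hα' : α = 1 - β := by linarith
    have hδ' : δ = 1 - γ := by linarith
    rw [hα', hδ'] at hcoef
    ring_nf at hcoef
    have hβ0 : β = 0 := by linarith
    have hγ0 : γ = 0 := by linarith
    have hα1 : α = 1 := by linarith
    rw [hα1, hβ0] at e1
    exact hvw (by simpa using e1)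


set_option maxHeartbeats 1000000

/-- A 2-neighborly centrally symmetric d-polytope has at most 2^d vertices. -/
theorem two_neighborly_cs_polytope_card_vertices_le
    (d : ℕ) (V : Finset (Fin d → ℝ)) (P : Set (Fin d → ℝ))
    (hP : P = convexHull ℝ (V : Set (Fin d → ℝ)))
    (hcs : ∀ v ∈ V, -v ∈ V)
    (hvert : ∀ v ∈ V, ∃ a : Fin d → ℝ,
      (∀ x ∈ P, ∑ i, a i * x i ≤ ∑ i, a i * v i) ∧
      {x ∈ P | ∑ i, a i * x i = ∑ i, a i * v i} = {v})
    (hneigh : ∀ v ∈ V, ∀ w ∈ V, v ≠ w → v ≠ -w →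
      ∃ a : Fin d → ℝ, ∃ c : ℝ,
        (∀ x ∈ P, ∑ i, a i * x i ≤ c) ∧
        {x ∈ P | ∑ i, a i * x i = c} = segment ℝ v w) :
    V.card ≤ 2 ^ d := by
  classical
  rcases Finset.eq_empty_or_nonempty V with rfl | hVne
  · simp
  subst hP
  set K : Set (Fin d → ℝ) := convexHull ℝ (V : Set (Fin d → ℝ)) with hKdef
  have hVK : (V : Set (Fin d → ℝ)) ⊆ K := subset_convexHull ℝ _
  have hKconv : Convex ℝ K := convex_convexHull ℝ _
  have hKcomp : IsCompact K := V.finite_toSet.isCompact_convexHull ℝ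
  have hnegV : -(V : Set (Fin d → ℝ)) ⊆ (V : Set (Fin d → ℝ)) := by
    intro x hx
    rw [Set.mem_neg] at hx
    simpa using hcs _ hx
  have hKcs : ∀ x ∈ K, -x ∈ K := by
    intro x hx
    have h1 : -x ∈ convexHull ℝ (-(V : Set (Fin d → ℝ))) := by
      rw [convexHull_neg]
      exact Set.neg_mem_neg.mpr hx
    exact convexHull_mono hnegV h1
  have hmid : ∀ v ∈ K, ∀ x ∈ K, (2⁻¹ : ℝ) • (v + x) ∈ K := by
    intro v hv x hx
    have := hKconv hv hx (by norm_num : (0:ℝ) ≤ 2⁻¹) (by norm_num : (0:ℝ) ≤ 2⁻¹) (by norm_num)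
    rw [smul_add]
    exact this
  obtain ⟨v₀, hv₀⟩ := hVne
  have h0K : (0 : Fin d → ℝ) ∈ K := by
    have := hmid v₀ (hVK hv₀) (-v₀) (hKcs _ (hVK hv₀))
    simpa using this
  set E : Submodule ℝ (Fin d → ℝ) := Submodule.span ℝ (V : Set (Fin d → ℝ)) with hEdef
  have hKE : K ⊆ (E : Set (Fin d → ℝ)) :=
    convexHull_min Submodule.subset_span E.convex
  letI : MeasurableSpace E := borel E
  haveI : BorelSpace E := ⟨rfl⟩
  set μ : Measure E := (Module.finBasis ℝ E).addHaar with hμdef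
  set L : Set E := Subtype.val ⁻¹' K with hLdef
  have hLclosed : IsClosed L := hKcomp.isClosed.preimage continuous_subtype_val
  have hLcomp : IsCompact L := by
    apply Metric.isCompact_of_isClosed_isBounded hLclosed
    obtain ⟨R, hR⟩ := hKcomp.isBounded.exists_norm_le
    apply (isBounded_iff_forall_norm_le).mpr
    exact ⟨R, fun y hy => hR _ hy⟩
  have hLconv : Convex ℝ L := hKconv.linear_preimage E.subtype
  have hL0 : (0 : E) ∈ L := by
    show ((0 : E) : Fin d → ℝ) ∈ K
    simpa using h0K
  have hspanV' : Submodule.span ℝ (Subtype.val ⁻¹' (V : Set (Fin d → ℝ)) : Set E) = ⊤ := by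
    apply Submodule.map_injective_of_injective E.injective_subtype
    rw [Submodule.map_span, Submodule.map_top, Submodule.range_subtype]
    have himg : E.subtype '' (Subtype.val ⁻¹' (V : Set (Fin d → ℝ))) = (V : Set (Fin d → ℝ)) := by
      rw [show (E.subtype : E → Fin d → ℝ) = Subtype.val from rfl]
      rw [Set.image_preimage_eq_inter_range, Subtype.range_coe]
      exact Set.inter_eq_self_of_subset_left fun v hv => Submodule.subset_span hv
    rw [himg]
  have hvs : vectorSpan ℝ L = ⊤ := by
    rw [eq_top_iff, ← hspanV', Submodule.span_le]
    intro y hy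
    have h1 : y ∈ L := by
      show (y : Fin d → ℝ) ∈ K
      exact hVK hy
    have := vsub_mem_vectorSpan ℝ h1 hL0
    simpa using this
  have haff : affineSpan ℝ L = ⊤ :=
    (AffineSubspace.affineSpan_eq_top_iff_vectorSpan_eq_top_of_nonempty ℝ ↥E ↥E ⟨0, hL0⟩).mpr hvs
  have hint : (interior L).Nonempty :=
    (hLconv.interior_nonempty_iff_affineSpan_eq_top).mpr haff
  have hμLpos : 0 < μ L := Measure.measure_pos_of_nonempty_interior μ hint
  have hμLfin : μ L < ⊤ := hLcomp.measure_lt_top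
  set n : ℕ := Module.finrank ℝ E with hndef
  set M : (Fin d → ℝ) → Set E :=
    fun v => {y : E | ∃ x ∈ K, (y : Fin d → ℝ) = (2⁻¹ : ℝ) • (v + x)} with hMdef
  have hMimg : ∀ v (hv : v ∈ E),
      M v = (fun y : E => (2⁻¹ : ℝ) • ((⟨v, hv⟩ : E) + y)) '' L := by
    intro v hv
    ext y
    constructor
    · rintro ⟨x, hx, hy⟩
      exact ⟨⟨x, hKE hx⟩, hx, Subtype.ext (by simp [hy])⟩
    · rintro ⟨z, hz, rfl⟩
      exact ⟨(z : Fin d → ℝ), hz, rfl⟩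
  have hMsub : ∀ v ∈ V, M v ⊆ L := by
    rintro v hv y ⟨x, hx, hy⟩
    show (y : Fin d → ℝ) ∈ K
    rw [hy]
    exact hmid v (hVK hv) x hx
  have hμM : ∀ v ∈ V, μ (M v) = ENNReal.ofReal ((2:ℝ)⁻¹ ^ n) * μ L := by
    intro v hv
    have hvE : v ∈ E := Submodule.subset_span hv
    rw [hMimg v hvE]
    have himg2 : (fun y : E => (2⁻¹:ℝ) • ((⟨v, hvE⟩ : E) + y)) '' L
        = (2⁻¹:ℝ) • ((fun y : E => (⟨v, hvE⟩ : E) + y) '' L) := by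
      rw [← Set.image_smul, Set.image_image]
    rw [himg2]
    have hsc := Measure.addHaar_smul μ (2⁻¹:ℝ) ((fun y : E => (⟨v, hvE⟩ : E) + y) '' L)
    rw [hsc]
    congr 1
    · rw [abs_of_nonneg (by positivity)]
    · rw [Set.image_add_left, measure_preimage_add]
  have hMnm : ∀ v ∈ V, NullMeasurableSet (M v) μ := by
    intro v hv
    have hc : IsCompact (M v) := by
      rw [hMimg v (Submodule.subset_span hv)]
      exact hLcomp.image (by fun_prop)
    exact hc.isClosed.measurableSet.nullMeasurableSet
  have hauxzero : ∀ (g : (Fin d → ℝ) →ₗ[ℝ] ℝ), g ∘ₗ E.subtype = 0 → ∀ x ∈ K, g x = 0 := by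
    intro g hg x hx
    have h1 : (g ∘ₗ E.subtype) ⟨x, hKE hx⟩ = 0 := by rw [hg]; rfl
    simpa using h1
  have hkey : ∀ v ∈ V, ∀ w ∈ V, ∀ (g : (Fin d → ℝ) →ₗ[ℝ] ℝ) (c : ℝ),
      (∀ x ∈ K, g x ≤ c) → g v = c → g w = -c → g ∘ₗ E.subtype ≠ 0 →
      AEDisjoint μ (M v) (M w) := by
    intro v hv w hw g c hub hgv hgw hg0
    have hsub : M v ∩ M w ⊆ (LinearMap.ker (g ∘ₗ E.subtype) : Set E) := by
      rintro y ⟨⟨x, hx, hyx⟩, ⟨z, hz, hyz⟩⟩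
      have hxlb : -c ≤ g x := by
        have h2 := hub (-x) (hKcs x hx)
        rw [map_neg] at h2
        linarith
      have hzub : g z ≤ c := hub z hz
      have e1 : g ↑y = 2⁻¹ * (g v + g x) := by
        rw [hyx, _root_.map_smul, map_add, smul_eq_mul]
      have e2 : g ↑y = 2⁻¹ * (g w + g z) := by
        rw [hyz, _root_.map_smul, map_add, smul_eq_mul]
      have hy0 : g ↑y = 0 := by
        rw [hgv] at e1
        rw [hgw] at e2
        linarith
      simpa [LinearMap.mem_ker] using hy0
    exact measure_mono_null hsub (Measure.addHaar_submodule μ _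
      (fun h => hg0 (LinearMap.ker_eq_top.mp h)))
  have hdisj : (V : Set (Fin d → ℝ)).Pairwise (Function.onFun (AEDisjoint μ) M) := by
    intro v hv w hw hvw
    rw [Finset.mem_coe] at hv hw
    by_cases hw' : w = -v
    · obtain ⟨a, hub, heqs⟩ := hvert v hv
      set g : (Fin d → ℝ) →ₗ[ℝ] ℝ := tncsAux a with hgd
      by_cases h0 : g ∘ₗ E.subtype = 0
      · exfalso
        have hzero := hauxzero g h0
        have hKsub : K ⊆ {x | x ∈ K ∧ ∑ i, a i * x i = ∑ i, a i * v i} := by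
          intro x hx
          refine ⟨hx, ?_⟩
          show g x = g v
          rw [hzero x hx, hzero v (hVK hv)]
        rw [heqs] at hKsub
        have hwv : w ∈ ({v} : Set (Fin d → ℝ)) := hKsub (hVK hw)
        exact hvw (Set.mem_singleton_iff.mp hwv).symm
      · subst hw'
        exact hkey v hv (-v) hw g (g v) hub rfl (by simp) h0
    · have hvnw : v ≠ -w := fun h => hw' (by rw [h]; simp)
      obtain ⟨a, c, hub, heqs⟩ := hneigh v hv (-w) (hcs w hw) hvnw (by simpa using hvw)
      set g : (Fin d → ℝ) →ₗ[ℝ] ℝ := tncsAux a with hgd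
      have hgv : g v = c := by
        have h3 := left_mem_segment ℝ v (-w)
        rw [← heqs] at h3
        exact h3.2
      have hgnw : g (-w) = c := by
        have h3 := right_mem_segment ℝ v (-w)
        rw [← heqs] at h3
        exact h3.2
      have hgw : g w = -c := by
        rw [map_neg] at hgnw
        linarith
      by_cases h0 : g ∘ₗ E.subtype = 0
      · exfalso
        have hzero := hauxzero g h0
        have hc0 : c = 0 := by rw [← hgv]; exact hzero v (hVK hv)
        have hKeq : K = segment ℝ v (-w) := by
          rw [← heqs]
          ext x
          refine ⟨fun hx => ⟨hx, ?_⟩, fun hx => hx.1⟩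
          show g x = c
          rw [hzero x hx, hc0]
        exact tncsSeg hvw (hKeq ▸ hVK hw) (hKeq ▸ hKcs v (hVK hv))
      · exact hkey v hv w hw g c hub hgv hgw h0
  -- final counting
  have hsum : ∑ v ∈ V, μ (M v) = μ (⋃ v ∈ V, M v) :=
    (measure_biUnion_finset₀ hdisj (fun b hb => hMnm b hb)).symm
  have hle : μ (⋃ v ∈ V, M v) ≤ μ L := measure_mono (Set.iUnion₂_subset hMsub)
  have h1 : (V.card : ℝ≥0∞) * (ENNReal.ofReal ((2:ℝ)⁻¹ ^ n) * μ L) ≤ μ L := by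
    calc (V.card : ℝ≥0∞) * (ENNReal.ofReal ((2:ℝ)⁻¹ ^ n) * μ L)
        = ∑ _v ∈ V, (ENNReal.ofReal ((2:ℝ)⁻¹ ^ n) * μ L) := by
          rw [Finset.sum_const, nsmul_eq_mul]
      _ = ∑ v ∈ V, μ (M v) := by
          exact Finset.sum_congr rfl (fun v hv => (hμM v hv).symm)
      _ = μ (⋃ v ∈ V, M v) := hsum
      _ ≤ μ L := hle
  have h2 : (V.card : ℝ≥0∞) * ENNReal.ofReal ((2:ℝ)⁻¹ ^ n) ≤ 1 := by
    rw [← ENNReal.mul_le_mul_iff_left hμLpos.ne' hμLfin.ne]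
    rw [mul_assoc]
    simpa using h1
  have hr : ENNReal.ofReal ((2:ℝ)⁻¹ ^ n) = ((2:ℝ≥0∞) ^ n)⁻¹ := by
    rw [ENNReal.ofReal_pow (by norm_num)]
    rw [ENNReal.ofReal_inv_of_pos (by norm_num)]
    norm_num [ENNReal.inv_pow]
  have h3 : (V.card : ℝ≥0∞) ≤ 2 ^ n := by
    have h4 := mul_le_mul_left h2 ((2:ℝ≥0∞) ^ n)
    rwa [hr, one_mul, mul_assoc, ENNReal.inv_mul_cancel (by positivity) (by simp),
      mul_one] at h4
  have h5 : V.card ≤ 2 ^ n := by exact_mod_cast h3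
  refine h5.trans (Nat.pow_le_pow_right (by norm_num) ?_)
  calc n ≤ Module.finrank ℝ (Fin d → ℝ) := Submodule.finrank_le E
    _ = d := Module.finrank_fin_fun ℝ
end

section
/- For all integers s and m with 1 ≤ s ≤ m/2, there exists a family F of s-element subsets of {1,...,m} with |F| ≥ (C·m/s)^{s/2} for some absolute constant C > 0 (one may take C = 1/(12e)^{1}, specifically |F| ≥ (m/s)^s / (1 + (12em/s)^{s/2})), such that |A ∩ B| ≤ s/2 for every two distinct A, B ∈ F. -/
open Real

open Finset in


-- (m/s)^s ≤ C(m,s), multiplicatively in ℕ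
lemma pow_le_choose_mul_pow : ∀ (s m : ℕ), s ≤ m → m ^ s ≤ m.choose s * s ^ s := by
  intro s
  induction s with
  | zero => simp
  | succ s ih =>
    intro m hm
    obtain ⟨n, rfl⟩ : ∃ n, m = n + 1 := ⟨m - 1, by omega⟩
    have hsn : s ≤ n := by omega
    have key : (n + 1) * Nat.choose n s = Nat.choose (n + 1) (s + 1) * (s + 1) :=
      Nat.add_one_mul_choose_eq n s
    have ihn := ih n hsn
    have hpos : 0 < s ^ s := by
      rcases Nat.eq_zero_or_pos s with h | h
      · simp [h]
      · exact Nat.pow_pos h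
    refine Nat.le_of_mul_le_mul_right ?_ hpos
    calc (n + 1) ^ (s + 1) * s ^ s
        = (n + 1) * ((n + 1) ^ s * s ^ s) := by ring
      _ = (n + 1) * ((n + 1) * s) ^ s := by rw [mul_pow]
      _ ≤ (n + 1) * (n * (s + 1)) ^ s := by
          exact Nat.mul_le_mul_left _ (Nat.pow_le_pow_left (by nlinarith) s)
      _ = (n + 1) * (n ^ s * (s + 1) ^ s) := by rw [mul_pow]
      _ ≤ (n + 1) * (Nat.choose n s * s ^ s * (s + 1) ^ s) := by
          exact Nat.mul_le_mul_left _ (Nat.mul_le_mul_right _ ihn)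
      _ = ((n + 1) * Nat.choose n s) * ((s + 1) ^ s * s ^ s) := by ring
      _ = (Nat.choose (n + 1) (s + 1) * (s + 1)) * ((s + 1) ^ s * s ^ s) := by rw [key]
      _ = Nat.choose (n + 1) (s + 1) * (s + 1) ^ (s + 1) * s ^ s := by ring

-- choose monotone below half
lemma choose_mono_of_le_half {n : ℕ} : ∀ l k, k ≤ l → l ≤ n / 2 →
    n.choose k ≤ n.choose l := by
  intro l
  induction l with
  | zero =>
    intro k hk _
    have : k = 0 := by omega
    simp [this]
  | succ l ih =>
    intro k hk hl
    rcases Nat.lt_or_ge k (l+1) with h | h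
    · exact le_trans (ih k (by omega) (by omega)) (Nat.choose_le_succ_of_lt_half_left (by omega))
    · have : k = l + 1 := by omega
      exact le_of_eq (by rw [this])

lemma choose_le_two_pow' (s t : ℕ) : s.choose t ≤ 2 ^ s := by
  rcases le_or_gt t s with h | h
  · calc s.choose t ≤ s.choose (s / 2) := Nat.choose_le_middle t s
      _ ≤ 2 ^ s := by
        have := Nat.sum_range_choose s
        have : s.choose (s/2) ≤ ∑ i ∈ Finset.range (s+1), s.choose i :=
          Finset.single_le_sum (fun i _ => Nat.zero_le _) (by simp; omega)
        omega
  · simp [Nat.choose_eq_zero_of_lt h]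

-- C(m,h) ≤ (e m / h)^h for h ≥ 1
lemma choose_le_exp_mul_pow (m h : ℕ) (hh : 1 ≤ h) :
    (m.choose h : ℝ) ≤ (Real.exp 1 * m / h) ^ h := by
  have hhR : (0:ℝ) < h := by exact_mod_cast hh
  have h1 : (m.choose h : ℝ) ≤ (m:ℝ) ^ h / (h.factorial : ℝ) := Nat.choose_le_pow_div h m
  have h2 : (h:ℝ) ^ h / (h.factorial : ℝ) ≤ Real.exp h :=
    Real.pow_div_factorial_le_exp (x := (h:ℝ)) (by positivity) h
  have hfac : (0:ℝ) < (h.factorial : ℝ) := by exact_mod_cast h.factorial_pos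
  have hexp : Real.exp (h:ℝ) = Real.exp 1 ^ h := by
    rw [← Real.exp_nat_mul]; ring_nf
  have h3 : (1:ℝ) / (h.factorial : ℝ) ≤ Real.exp 1 ^ h / (h:ℝ) ^ h := by
    rw [div_le_div_iff₀ hfac (by positivity)]
    rw [hexp] at h2
    rw [div_le_iff₀ hfac] at h2
    nlinarith [h2]
  calc (m.choose h : ℝ) ≤ (m:ℝ) ^ h / (h.factorial : ℝ) := h1
    _ = (m:ℝ) ^ h * (1 / (h.factorial : ℝ)) := by ring
    _ ≤ (m:ℝ) ^ h * (Real.exp 1 ^ h / (h:ℝ) ^ h) := by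
        exact mul_le_mul_of_nonneg_left h3 (by positivity)
    _ = (Real.exp 1 * m / h) ^ h := by
        rw [div_pow, mul_pow]; ring

open Finset in


lemma greedy_family (m s : ℕ) (h1 : 1 ≤ s) (h2 : 2 * s ≤ m) :
    ∃ F : Finset (Finset (Fin m)),
      (∀ A ∈ F, A.card = s) ∧
      (∀ A ∈ F, ∀ B ∈ F, A ≠ B → 2 * (A ∩ B).card ≤ s) ∧
      m.choose s ≤ F.card * (1 + s.choose (s / 2 + 1) * m.choose (s / 2)) := by
  classical
  set U : Finset (Finset (Fin m)) := Finset.univ.powersetCard s with hU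
  have hUcard : U.card = m.choose s := by
    simp [hU, Finset.card_powersetCard]
  set P : Finset (Finset (Fin m)) → Prop :=
    fun F => ∀ A ∈ F, ∀ B ∈ F, A ≠ B → 2 * (A ∩ B).card ≤ s with hP
  set 𝒞 : Finset (Finset (Finset (Fin m))) := U.powerset.filter P with hC
  have hne : 𝒞.Nonempty := ⟨∅, by simp [hC, hP]⟩
  obtain ⟨F, hF, hFmax⟩ := 𝒞.exists_max_image Finset.card hne
  rw [hC, Finset.mem_filter, Finset.mem_powerset] at hF
  obtain ⟨hFU, hFP⟩ := hF
  have hcards : ∀ A ∈ F, A.card = s := by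
    intro A hA
    have := hFU hA
    rw [hU, Finset.mem_powersetCard] at this
    exact this.2
  refine ⟨F, hcards, hFP, ?_⟩
  -- maximality: every s-set is covered
  have hcover : ∀ B ∈ U, ∃ A ∈ F, B = A ∨ s < 2 * (A ∩ B).card := by
    intro B hB
    by_contra hcon
    push_neg at hcon
    have hBF : B ∉ F := fun h => (hcon B h).1 rfl
    have hins : insert B F ∈ 𝒞 := by
      rw [hC, Finset.mem_filter, Finset.mem_powerset]
      constructor
      · intro X hX
        rcases Finset.mem_insert.mp hX with rfl | hX
        · exact hB
        · exact hFU hX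
      · intro X hX Y hY hne'
        rcases Finset.mem_insert.mp hX with hX' | hX' <;>
          rcases Finset.mem_insert.mp hY with hY' | hY'
        · exact absurd (hX'.trans hY'.symm) hne'
        · subst hX'; rw [Finset.inter_comm]; exact (hcon Y hY').2
        · subst hY'; exact (hcon X hX').2
        · exact hFP X hX' Y hY' hne'
    have := hFmax _ hins
    rw [Finset.card_insert_of_notMem hBF] at this
    omega
  -- counting
  set t := s / 2 + 1 with ht
  have hts : t ≤ s := by omega
  have hbound : ∀ A ∈ F,
      (U.filter (fun B => s < 2 * (A ∩ B).card)).card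
        ≤ s.choose t * m.choose (s - t) := by
    intro A hA
    have hAcard := hcards A hA
    set V := U.filter (fun B => s < 2 * (A ∩ B).card) with hV
    have hsub : ∀ B ∈ V, t ≤ (A ∩ B).card := by
      intro B hBv
      rw [hV, Finset.mem_filter] at hBv
      omega
    -- pick a t-subset of A ∩ B for each B
    have hex : ∀ B ∈ V, ∃ S ⊆ A ∩ B, S.card = t := fun B hBv =>
      Finset.exists_subset_card_eq (hsub B hBv)
    choose! S hS1 hS2 using hex
    have hmaps : ∀ B ∈ V, (S B, B \ S B) ∈
        A.powersetCard t ×ˢ (Finset.univ.powersetCard (s - t)) := by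
      intro B hBv
      have hBU : B ∈ U := (Finset.mem_filter.mp hBv).1
      have hBcard : B.card = s := by
        rw [hU, Finset.mem_powersetCard] at hBU; exact hBU.2
      have hSB : S B ⊆ B := (hS1 B hBv).trans Finset.inter_subset_right
      rw [Finset.mem_product, Finset.mem_powersetCard, Finset.mem_powersetCard]
      refine ⟨⟨(hS1 B hBv).trans Finset.inter_subset_left, hS2 B hBv⟩,
        Finset.subset_univ _, ?_⟩
      rw [Finset.card_sdiff_of_subset hSB, hBcard, hS2 B hBv]
    have hinjOn : ∀ B₁ ∈ V, ∀ B₂ ∈ V,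
        (S B₁, B₁ \ S B₁) = (S B₂, B₂ \ S B₂) → B₁ = B₂ := by
      intro B₁ h₁ B₂ h₂ heq
      have e1 : S B₁ = S B₂ := congrArg Prod.fst heq
      have e2 : B₁ \ S B₁ = B₂ \ S B₂ := congrArg Prod.snd heq
      have r1 : S B₁ ∪ (B₁ \ S B₁) = B₁ :=
        Finset.union_sdiff_of_subset ((hS1 B₁ h₁).trans Finset.inter_subset_right)
      have r2 : S B₂ ∪ (B₂ \ S B₂) = B₂ :=
        Finset.union_sdiff_of_subset ((hS1 B₂ h₂).trans Finset.inter_subset_right)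
      rw [← r1, ← r2, e2, e1]
    have := Finset.card_le_card_of_injOn (fun B => (S B, B \ S B)) hmaps hinjOn
    calc V.card ≤ (A.powersetCard t ×ˢ (Finset.univ.powersetCard (s - t))).card := this
      _ = s.choose t * m.choose (s - t) := by
          rw [Finset.card_product, Finset.card_powersetCard, Finset.card_powersetCard,
            hAcard, Finset.card_univ, Fintype.card_fin]
  -- union bound
  have hUsub : U ⊆ F.biUnion (fun A => insert A (U.filter (fun B => s < 2 * (A ∩ B).card))) := by
    intro B hB
    obtain ⟨A, hA, hcase⟩ := hcover B hB
    rw [Finset.mem_biUnion]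
    exact ⟨A, hA, by
      rcases hcase with rfl | h
      · exact Finset.mem_insert_self _ _
      · exact Finset.mem_insert_of_mem (Finset.mem_filter.mpr ⟨hB, h⟩)⟩
  have hchain : m.choose s ≤ F.card * (1 + s.choose t * m.choose (s - t)) := by
    calc m.choose s = U.card := hUcard.symm
      _ ≤ (F.biUnion (fun A => insert A (U.filter (fun B => s < 2 * (A ∩ B).card)))).card :=
          Finset.card_le_card hUsub
      _ ≤ ∑ A ∈ F, (insert A (U.filter (fun B => s < 2 * (A ∩ B).card))).card :=
          Finset.card_biUnion_le
      _ ≤ ∑ A ∈ F, (1 + s.choose t * m.choose (s - t)) := by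
          refine Finset.sum_le_sum (fun A hA => ?_)
          calc (insert A (U.filter (fun B => s < 2 * (A ∩ B).card))).card
              ≤ (U.filter (fun B => s < 2 * (A ∩ B).card)).card + 1 :=
                Finset.card_insert_le _ _
            _ ≤ 1 + s.choose t * m.choose (s - t) := by
                have := hbound A hA; omega
      _ = F.card * (1 + s.choose t * m.choose (s - t)) := by
          rw [Finset.sum_const, smul_eq_mul]
  have hmono : m.choose (s - t) ≤ m.choose (s / 2) :=
    choose_mono_of_le_half _ _ (by omega) (by omega)
  calc m.choose s ≤ F.card * (1 + s.choose t * m.choose (s - t)) := hchain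
    _ ≤ F.card * (1 + s.choose t * m.choose (s / 2)) := by
        exact Nat.mul_le_mul_left _ (by
          have := Nat.mul_le_mul_left (s.choose t) hmono; omega)

/-- There is an absolute constant C > 0 such that for all 1 ≤ s ≤ m/2 there is a
family F of s-subsets of [m], pairwise intersecting in at most s/2 elements, with
|F| ≥ (Cm/s)^{s/2}; specifically |F| ≥ (m/s)^s / (1 + (12em/s)^{s/2}). -/
theorem exists_large_family_small_intersections :
    ∃ C : ℝ, 0 < C ∧ ∀ (m s : ℕ), 1 ≤ s → 2 * s ≤ m →
      ∃ F : Finset (Finset (Fin m)),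
        (∀ A ∈ F, A.card = s) ∧
        (∀ A ∈ F, ∀ B ∈ F, A ≠ B → 2 * (A ∩ B).card ≤ s) ∧
        (C * m / s) ^ ((s : ℝ) / 2) ≤ F.card ∧
        ((m : ℝ) / s) ^ s / (1 + (12 * Real.exp 1 * m / s) ^ ((s : ℝ) / 2)) ≤ F.card := by
  set e := Real.exp 1 with he
  have he1 : 1 ≤ e := Real.one_le_exp (by norm_num)
  have he0 : 0 < e := lt_of_lt_of_le one_pos he1
  refine ⟨1 / (48 * e), by positivity, ?_⟩
  intro m s h1 h2
  obtain ⟨F, hFcards, hFpair, hFcount⟩ := greedy_family m s h1 h2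
  refine ⟨F, hFcards, hFpair, ?_⟩
  have hs0 : (0:ℝ) < s := by exact_mod_cast h1
  have hm0 : (0:ℝ) < m := by
    have : (0:ℕ) < m := by omega
    exact_mod_cast this
  set x : ℝ := (m:ℝ) / s with hx
  have hx2 : (2:ℝ) ≤ x := by
    rw [hx, le_div_iff₀ hs0]
    exact_mod_cast h2
  have hx0 : (0:ℝ) ≤ x := by linarith
  set D : ℝ := (12 * e * m / s) ^ ((s:ℝ)/2) with hD
  have hbase : (1:ℝ) ≤ 12 * e * m / s := by
    have : 12 * e * m / s = 12 * e * x := by rw [hx]; ring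
    rw [this]; nlinarith
  have hD1 : (1:ℝ) ≤ D := Real.one_le_rpow hbase (by positivity)
  have hD0 : (0:ℝ) < 1 + D := by linarith
  -- Step A : K ≤ D
  have hKD : ((s.choose (s/2+1) * m.choose (s/2) : ℕ) : ℝ) ≤ D := by
    rcases Nat.eq_zero_or_pos (s/2) with hh | hh
    · -- s = 1
      have hs1 : s = 1 := by omega
      subst hs1
      norm_num
      exact hD1.trans_eq (by rw [hD])
    · set h := s / 2 with hhd
      have hsh : s ≤ 3 * h := by omega
      have hhs : (h:ℝ) ≤ (s:ℝ)/2 := by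
        have h2h : (2 * h : ℕ) ≤ s := by omega
        have := (Nat.cast_le (α := ℝ)).mpr h2h
        push_cast at this
        linarith
      have hc1 : ((s.choose (s/2+1) : ℕ) : ℝ) ≤ 2 ^ s := by
        exact_mod_cast choose_le_two_pow' s (s/2+1)
      have hc2 : ((m.choose h : ℕ) : ℝ) ≤ (e * m / h) ^ h :=
        choose_le_exp_mul_pow m h hh
      have hh0 : (0:ℝ) < h := by exact_mod_cast hh
      have hstep3 : (e * m / (h:ℝ)) ≤ 3 * e * m / s := by
        rw [div_le_div_iff₀ hh0 hs0]
        have hcast : (s:ℝ) ≤ 3 * h := by exact_mod_cast hsh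
        nlinarith [mul_le_mul_of_nonneg_left hcast (mul_nonneg he0.le hm0.le)]
      have hstep34 : ((e * m / h) ^ h : ℝ) ≤ (3 * e * m / s) ^ ((s:ℝ)/2) := by
        calc ((e * m / h) ^ h : ℝ) = (e * m / h) ^ ((h:ℕ):ℝ) := (Real.rpow_natCast _ _).symm
          _ ≤ (3 * e * m / s) ^ ((h:ℕ):ℝ) :=
              Real.rpow_le_rpow (by positivity) hstep3 (by positivity)
          _ ≤ (3 * e * m / s) ^ ((s:ℝ)/2) := by
              have hb3 : (1:ℝ) ≤ 3 * e * m / s := by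
                have heq : 3 * e * (m:ℝ) / s = 3 * e * x := by rw [hx]; ring
                rw [heq]; nlinarith
              exact Real.rpow_le_rpow_of_exponent_le hb3 hhs
      have h2pow : ((2:ℝ) ^ s) = (4:ℝ) ^ ((s:ℝ)/2) := by
        rw [show (4:ℝ) = 2^(2:ℕ) by norm_num, ← Real.rpow_natCast 2 2,
          ← Real.rpow_mul (by norm_num)]
        rw [show ((2:ℕ):ℝ) * ((s:ℝ)/2) = (s:ℝ) by push_cast; ring, Real.rpow_natCast]
      calc ((s.choose (s/2+1) * m.choose (s/2) : ℕ) : ℝ)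
          = ((s.choose (s/2+1) : ℕ) : ℝ) * ((m.choose h : ℕ) : ℝ) := by
            rw [hhd]; push_cast; ring
        _ ≤ (2:ℝ) ^ s * (3 * e * m / s) ^ ((s:ℝ)/2) := by
            apply mul_le_mul hc1 (hc2.trans hstep34) (by positivity) (by positivity)
        _ = (4:ℝ) ^ ((s:ℝ)/2) * (3 * e * m / s) ^ ((s:ℝ)/2) := by rw [h2pow]
        _ = (4 * (3 * e * m / s)) ^ ((s:ℝ)/2) := by
            rw [← Real.mul_rpow (by norm_num) (by positivity)]
        _ = D := by rw [hD]; ring_nf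
  -- Step B : x^s ≤ choose m s
  have hBstep : x ^ s ≤ (m.choose s : ℝ) := by
    have hnat := pow_le_choose_mul_pow s m (by omega)
    have hcast : ((m:ℝ)) ^ s ≤ (m.choose s : ℝ) * ((s:ℝ)) ^ s := by exact_mod_cast hnat
    rw [hx, div_pow, div_le_iff₀ (by positivity)]
    exact hcast
  -- Step C/D : second inequality
  have hcount : (m.choose s : ℝ) ≤ (F.card : ℝ) * (1 + D) := by
    have : ((m.choose s : ℕ) : ℝ) ≤ (F.card : ℝ) *
        (1 + ((s.choose (s/2+1) * m.choose (s/2) : ℕ) : ℝ)) := by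
      exact_mod_cast hFcount
    refine this.trans ?_
    apply mul_le_mul_of_nonneg_left _ (by positivity)
    linarith
  have hsecond : x ^ s / (1 + D) ≤ (F.card : ℝ) := by
    rw [div_le_iff₀ hD0]
    exact hBstep.trans hcount
  constructor
  · -- first inequality
    refine le_trans ?_ hsecond
    set a : ℝ := (1 / (48 * e) * m / s) ^ ((s:ℝ)/2) with ha
    have ha0 : (0:ℝ) ≤ a := Real.rpow_nonneg (by positivity) _
    rw [le_div_iff₀ hD0]
    have haD : a * D = x ^ s / 4 ^ ((s:ℝ)/2) := by
      rw [ha, hD, ← Real.mul_rpow (by positivity) (by positivity)]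
      rw [show (1 / (48 * e) * m / s) * (12 * e * m / s) = x^2 / 4 by
        rw [hx]; field_simp; ring]
      rw [Real.div_rpow (by positivity) (by norm_num)]
      congr 1
      rw [← Real.rpow_natCast x 2, ← Real.rpow_mul hx0]
      rw [show ((2:ℕ):ℝ) * ((s:ℝ)/2) = (s:ℝ) by push_cast; ring, Real.rpow_natCast]
    have h4 : (2:ℝ) ≤ 4 ^ ((s:ℝ)/2) := by
      calc (2:ℝ) = 4 ^ ((1:ℝ)/2) := by
            rw [show (4:ℝ) = 2^(2:ℕ) by norm_num, ← Real.rpow_natCast 2 2,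
              ← Real.rpow_mul (by norm_num)]
            norm_num
        _ ≤ 4 ^ ((s:ℝ)/2) := by
            apply Real.rpow_le_rpow_of_exponent_le (by norm_num)
            have : (1:ℝ) ≤ (s:ℝ) := by exact_mod_cast h1
            linarith
    calc a * (1 + D) ≤ a * (D + D) := by
          apply mul_le_mul_of_nonneg_left _ ha0
          linarith
      _ = 2 * (a * D) := by ring
      _ = 2 * (x ^ s / 4 ^ ((s:ℝ)/2)) := by rw [haD]
      _ ≤ 2 * (x ^ s / 2) := by
          apply mul_le_mul_of_nonneg_left _ (by norm_num)
          apply div_le_div_of_nonneg_left (by positivity) (by norm_num) h4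
      _ = x ^ s := by ring
  · exact hsecond
end

section
/- Let P be a 2s-neighborly centrally symmetric d-polytope with vertex set {±v_1,...,±v_m}, and let A, B be distinct s-element subsets of {1,...,m} with |A ∩ B| ≤ s/2. Then the translates P + (2/s)Σ_{i∈A} v_i and P + (2/s)Σ_{i∈B} v_i have disjoint interiors. -/
/-- For a 2s-neighborly centrally symmetric polytope P with vertices ±v_1,...,±v_m,
and distinct s-subsets A, B of [m] with |A ∩ B| ≤ s/2, the translates
P + (2/s)Σ_{i∈A} v_i and P + (2/s)Σ_{i∈B} v_i have disjoint interiors. -/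
theorem translates_have_disjoint_interiors
    (d m s : ℕ) (hs : 1 ≤ s) (v : Fin m → (Fin d → ℝ)) (P : Set (Fin d → ℝ))
    (hP : P = convexHull ℝ (Set.range v ∪ Set.range (fun i => -v i)))
    (hneigh : ∀ (I : Finset (Fin m)) (δ : Fin m → ℝ), I.card ≤ 2 * s →
      (∀ i, δ i = 1 ∨ δ i = -1) →
      ∃ a : Fin d → ℝ, ∃ c : ℝ,
        (∀ x ∈ P, ∑ j, a j * x j ≤ c) ∧
        {x ∈ P | ∑ j, a j * x j = c} = convexHull ℝ ((fun i => δ i • v i) '' I) ∧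
        convexHull ℝ ((fun i => δ i • v i) '' I) ≠ P)
    (A B : Finset (Fin m)) (hA : A.card = s) (hB : B.card = s) (hAB : A ≠ B)
    (hcap : 2 * (A ∩ B).card ≤ s) :
    Disjoint (interior ((fun x => x + (2 / (s : ℝ)) • ∑ i ∈ A, v i) '' P))
             (interior ((fun x => x + (2 / (s : ℝ)) • ∑ i ∈ B, v i) '' P)) := by
  classical
  by_contra hcon
  rw [Set.not_disjoint_iff] at hcon
  obtain ⟨z, hz1, hz2⟩ := hcon
  set R : Finset (Fin m) := (A \ B) ∪ (B \ A) with hRdef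
  set δ : Fin m → ℝ := fun i => if i ∈ A then 1 else -1 with hδ
  -- A \ B nonempty
  have hABne : (A \ B).Nonempty := by
    rw [Finset.sdiff_nonempty]
    intro hsub
    exact hAB (Finset.eq_of_subset_of_card_le hsub (by omega))
  obtain ⟨i₀, hi₀⟩ := hABne
  have hi₀R : i₀ ∈ R := Finset.mem_union.2 (Or.inl hi₀)
  -- cardinalities
  have hdisj : Disjoint (A \ B) (B \ A) := disjoint_sdiff_sdiff
  have hcardR : R.card = (A \ B).card + (B \ A).card := Finset.card_union_of_disjoint hdisj
  have h1 : (A \ B).card + (A ∩ B).card = A.card := Finset.card_sdiff_add_card_inter A B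
  have h2 : (B \ A).card + (B ∩ A).card = B.card := Finset.card_sdiff_add_card_inter B A
  have hBAc : (B ∩ A).card = (A ∩ B).card := by rw [Finset.inter_comm]
  have hsR : s ≤ R.card := by omega
  have hR2s : R.card ≤ 2 * s := by omega
  -- apply neighborliness
  obtain ⟨a, c, hsupp, hface, hne⟩ := hneigh R δ hR2s
    (fun i => by by_cases h : i ∈ A <;> simp [hδ, h])
  have hPconv : Convex ℝ P := hP ▸ convex_convexHull ℝ _
  have hvP : ∀ i, v i ∈ P := fun i => hP ▸ subset_convexHull ℝ _ (Or.inl ⟨i, rfl⟩)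
  have hnvP : ∀ i, -v i ∈ P := fun i => hP ▸ subset_convexHull ℝ _ (Or.inr ⟨i, rfl⟩)
  have h0P : (0 : Fin d → ℝ) ∈ P := by
    have h := hPconv (hvP i₀) (hnvP i₀) (by norm_num : (0:ℝ) ≤ 1/2)
      (by norm_num : (0:ℝ) ≤ 1/2) (by norm_num)
    simpa [smul_neg] using h
  have hc0 : 0 ≤ c := by
    have := hsupp 0 h0P
    simpa using this
  -- face membership of vertices
  have hmem : ∀ i ∈ R, δ i • v i ∈ P ∧ ∑ j, a j * (δ i • v i) j = c := by
    intro i hi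
    have hmem' : δ i • v i ∈ {x ∈ P | ∑ j, a j * x j = c} := by
      rw [hface]
      exact subset_convexHull ℝ _ ⟨i, hi, rfl⟩
    exact ⟨hmem'.1, hmem'.2⟩
  -- a ≠ 0
  have ha : a ≠ 0 := by
    intro h
    subst h
    have hc : c = 0 := by
      have := (hmem i₀ hi₀R).2
      simpa using this.symm
    apply hne
    rw [← hface]
    ext x
    simp [hc]
  -- symmetry of P
  have hPneg : -P = P := by
    rw [hP, ← convexHull_neg]
    congr 1
    ext x
    simp only [Set.mem_neg, Set.mem_union, Set.mem_range]
    constructor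
    · rintro (⟨i, hi⟩ | ⟨i, hi⟩)
      · exact Or.inr ⟨i, by rw [hi, neg_neg]⟩
      · exact Or.inl ⟨i, neg_injective hi⟩
    · rintro (⟨i, hi⟩ | ⟨i, hi⟩)
      · exact Or.inr ⟨i, by rw [hi]⟩
      · exact Or.inl ⟨i, by rw [← hi, neg_neg]⟩
  -- unpack interiors of translates
  have himg : ∀ t : Fin d → ℝ,
      interior ((fun x => x + t) '' P) = (fun x => x + t) '' interior P := fun t =>
    ((Homeomorph.addRight t).image_interior P).symm
  rw [himg] at hz1 hz2
  obtain ⟨u, hu, huz⟩ := hz1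
  obtain ⟨w, hw, hwz⟩ := hz2
  -- the sum identity
  have hsum : ∑ i ∈ R, δ i • v i = ∑ i ∈ A, v i - ∑ i ∈ B, v i := by
    rw [hRdef, Finset.sum_union hdisj]
    have e1 : ∑ i ∈ A \ B, δ i • v i = ∑ i ∈ A \ B, v i :=
      Finset.sum_congr rfl fun i hi => by simp [hδ, (Finset.mem_sdiff.1 hi).1]
    have e2 : ∑ i ∈ B \ A, δ i • v i = -∑ i ∈ B \ A, v i := by
      rw [← Finset.sum_neg_distrib]
      exact Finset.sum_congr rfl fun i hi => by simp [hδ, (Finset.mem_sdiff.1 hi).2]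
    have eA : ∑ i ∈ A \ B, v i + ∑ i ∈ A ∩ B, v i = ∑ i ∈ A, v i := by
      rw [← Finset.sdiff_inter_self_left A B]
      exact Finset.sum_sdiff Finset.inter_subset_left
    have eB : ∑ i ∈ B \ A, v i + ∑ i ∈ B ∩ A, v i = ∑ i ∈ B, v i := by
      rw [← Finset.sdiff_inter_self_left B A]
      exact Finset.sum_sdiff Finset.inter_subset_left
    have eAB : ∑ i ∈ B ∩ A, v i = ∑ i ∈ A ∩ B, v i := by rw [Finset.inter_comm]
    rw [e1, e2, ← eA, ← eB, eAB]
    abel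
  have hs0 : (s : ℝ) ≠ 0 := by positivity
  -- p ∈ interior P
  have hnu : -u ∈ interior P := by
    have h := (Homeomorph.neg (Fin d → ℝ)).image_interior P
    have h2 : (Neg.neg '' P : Set (Fin d → ℝ)) = P := by
      rw [Set.image_neg_eq_neg, hPneg]
    have h3 : (Neg.neg '' interior P : Set (Fin d → ℝ)) = interior P := by
      calc (Neg.neg '' interior P : Set (Fin d → ℝ))
          = interior (Neg.neg '' P) := h
        _ = interior P := by rw [h2]
    rw [← h3]
    exact ⟨u, hu, rfl⟩
  have hintconv : Convex ℝ (interior P) := hPconv.interior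
  have hcomb := hintconv hw hnu (by norm_num : (0:ℝ) ≤ 1/2)
    (by norm_num : (0:ℝ) ≤ 1/2) (by norm_num)
  have h' : u + (2 / (s:ℝ)) • ∑ i ∈ A, v i = w + (2 / (s:ℝ)) • ∑ i ∈ B, v i :=
    huz.trans hwz.symm
  have hwu : w - u = (2 / (s:ℝ)) • ∑ i ∈ R, δ i • v i := by
    rw [hsum, smul_sub, sub_eq_sub_iff_add_eq_add, ← h']
    exact add_comm _ _
  set S : Fin d → ℝ := ∑ i ∈ R, δ i • v i with hSdef
  set p : Fin d → ℝ := ((s : ℝ))⁻¹ • S with hpdef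
  have hpw : (1/2 : ℝ) • w + (1/2 : ℝ) • (-u) = p := by
    have he : (1/2 : ℝ) • w + (1/2 : ℝ) • (-u) = (1/2 : ℝ) • (w - u) := by
      rw [smul_sub, smul_neg, sub_eq_add_neg]
    rw [he, hwu, smul_smul, hpdef]
    congr 1
    field_simp
  have hpint : p ∈ interior P := hpw ▸ hcomb
  -- linear functional values
  have hfS : ∑ j, a j * S j = (R.card : ℝ) * c := by
    calc ∑ j, a j * S j = ∑ j, ∑ i ∈ R, a j * (δ i • v i) j := by
          refine Finset.sum_congr rfl fun j _ => ?_
          rw [show S j = ∑ i ∈ R, (δ i • v i) j from by rw [hSdef]; exact Finset.sum_apply j R _,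
            Finset.mul_sum]
      _ = ∑ i ∈ R, ∑ j, a j * (δ i • v i) j := Finset.sum_comm
      _ = ∑ i ∈ R, c := Finset.sum_congr rfl fun i hi => (hmem i hi).2
      _ = (R.card : ℝ) * c := by rw [Finset.sum_const, nsmul_eq_mul]
  have hfp : ∑ j, a j * p j = ((s : ℝ))⁻¹ * ((R.card : ℝ) * c) := by
    rw [← hfS, Finset.mul_sum]
    refine Finset.sum_congr rfl fun j _ => ?_
    rw [hpdef]
    simp [mul_left_comm]
  have hsRr : (s : ℝ) ≤ (R.card : ℝ) := by exact_mod_cast hsR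
  have hfpge : c ≤ ∑ j, a j * p j := by
    rw [hfp]
    have h1 : (s:ℝ) * c ≤ (R.card : ℝ) * c := mul_le_mul_of_nonneg_right hsRr hc0
    have h2 : ((s:ℝ))⁻¹ * ((s:ℝ) * c) ≤ ((s:ℝ))⁻¹ * ((R.card : ℝ) * c) :=
      mul_le_mul_of_nonneg_left h1 (by positivity)
    calc c = ((s:ℝ))⁻¹ * ((s:ℝ) * c) := by field_simp
      _ ≤ _ := h2
  -- final contradiction
  obtain ⟨ε, hε, hball⟩ := Metric.isOpen_iff.1 isOpen_interior p hpint
  have hna : 0 < ‖a‖ := norm_pos_iff.2 ha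
  set t : ℝ := ε / (2 * ‖a‖) with htdef
  have ht : 0 < t := by positivity
  have hq : p + t • a ∈ P := by
    refine interior_subset (hball ?_)
    rw [Metric.mem_ball, dist_eq_norm]
    have : p + t • a - p = t • a := by abel
    rw [this, norm_smul, Real.norm_eq_abs, abs_of_pos ht, htdef]
    have he : ε / (2 * ‖a‖) * ‖a‖ = ε / 2 := by
      field_simp
    rw [he]
    linarith
  have haa : 0 < ∑ j, a j * a j := by
    obtain ⟨j, hj⟩ := Function.ne_iff.1 ha
    refine Finset.sum_pos' (fun k _ => mul_self_nonneg _) ⟨j, Finset.mem_univ j, ?_⟩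
    exact mul_self_pos.2 hj
  have hqval : ∑ j, a j * (p + t • a) j = (∑ j, a j * p j) + t * ∑ j, a j * a j := by
    rw [Finset.mul_sum]
    rw [← Finset.sum_add_distrib]
    refine Finset.sum_congr rfl fun j _ => ?_
    simp [mul_add]
    ring
  have := hsupp _ hq
  rw [hqval] at this
  nlinarith
end

section
/- If P is a 2s-neighborly centrally symmetric d-polytope with 2m vertices and 2s ≤ d ≤ m, then 3^d ≥ (Cm/s)^{s/2}, where C is the absolute constant from the packing family lemma; consequently s ≤ C₂·d/(1 + log(m/d)) for an absolute constant C₂ > 0. -/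
open Finset MeasureTheory Set Pointwise
open scoped ENNReal


lemma choose_mono_half (n : ℕ) : ∀ {k l : ℕ}, k ≤ l → l ≤ n / 2 → n.choose k ≤ n.choose l := by
  intro k l hkl
  induction l with
  | zero => intro _; rw [Nat.le_zero.mp hkl]
  | succ l ih =>
    intro hl
    rcases Nat.lt_or_ge k (l+1) with h | h
    · exact le_trans (ih (by omega) (by omega)) (Nat.choose_le_succ_of_lt_half_left (by omega))
    · have : k = l + 1 := by omega
      subst this; exact le_rfl

lemma choose_ratio (m s : ℕ) (hs : 1 ≤ s) (hsm : 2 * s ≤ m) :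
    ∀ j, s / 2 + j ≤ s →
      (m.choose (s / 2) : ℝ) * ((m : ℝ) / (2 * s)) ^ j ≤ m.choose (s / 2 + j) := by
  intro j
  induction j with
  | zero => intro _; simp
  | succ j ih =>
    intro hj
    set k := s / 2 + j with hk
    have hks : k + 1 ≤ s := by omega
    have hkm : k ≤ m := by omega
    have key : (m.choose (k + 1) : ℝ) * (k + 1) = m.choose k * ((m : ℝ) - k) := by
      have := Nat.choose_succ_right_eq m k
      have h2 : ((m.choose (k+1) * (k+1) : ℕ) : ℝ) = ((m.choose k * (m - k) : ℕ) : ℝ) := by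
        exact_mod_cast congrArg (Nat.cast (R := ℝ)) this
      push_cast [Nat.cast_sub hkm] at h2
      linarith [h2]
    have hch : (0:ℝ) < m.choose k := by
      exact_mod_cast Nat.choose_pos (by omega)
    have hstep : (m.choose k : ℝ) * ((m : ℝ) / (2 * s)) ≤ m.choose (k + 1) := by
      have hc : (m.choose (k+1) : ℝ) = m.choose k * (((m : ℝ) - k) / (k + 1)) := by
        field_simp at key ⊢; linarith [key]
      rw [hc]
      apply mul_le_mul_of_nonneg_left _ (le_of_lt hch)
      rw [div_le_div_iff₀ (by positivity) (by positivity)]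
      have h1 : (k : ℝ) + 1 ≤ s := by exact_mod_cast hks
      have h2 : 2 * (s:ℝ) ≤ m := by exact_mod_cast hsm
      nlinarith
    calc (m.choose (s/2) : ℝ) * ((m : ℝ) / (2 * s)) ^ (j+1)
        = ((m.choose (s/2) : ℝ) * ((m : ℝ) / (2 * s)) ^ j) * ((m : ℝ) / (2 * s)) := by ring
      _ ≤ (m.choose k : ℝ) * ((m : ℝ) / (2 * s)) := by
          apply mul_le_mul_of_nonneg_right (ih (by omega)) (by positivity)
      _ ≤ m.choose (k + 1) := hstep

lemma pack_lemma (m s : ℕ) (hs : 1 ≤ s) (hsm : 2 * s ≤ m) :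
    ∃ F : Finset (Finset (Fin m)), (∀ A ∈ F, A.card = s) ∧
      (∀ A ∈ F, ∀ B ∈ F, A ≠ B → 2 * (A ∩ B).card ≤ s) ∧
      ((m : ℝ) / (32 * s)) ^ ((s : ℝ) / 2) ≤ F.card := by
  classical
  set h := s / 2 with hh
  -- maximal family
  set good : Finset (Finset (Fin m)) → Prop := fun F =>
    (∀ A ∈ F, A.card = s) ∧ ∀ A ∈ F, ∀ B ∈ F, A ≠ B → 2 * (A ∩ B).card ≤ s with hgood
  set 𝒞 : Finset (Finset (Finset (Fin m))) := univ.filter good with h𝒞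
  have hne : 𝒞.Nonempty := ⟨∅, by simp [h𝒞, hgood]⟩
  obtain ⟨F, hF𝒞, hFmax⟩ := 𝒞.exists_max_image (fun F => F.card) hne
  rw [h𝒞, mem_filter] at hF𝒞
  obtain ⟨-, hFcard, hFint⟩ := hF𝒞
  refine ⟨F, hFcard, hFint, ?_⟩
  -- covering
  have hcover : ∀ A ∈ powersetCard s (univ : Finset (Fin m)), ∃ B ∈ F, s < 2 * (A ∩ B).card := by
    intro A hA
    rw [mem_powersetCard] at hA
    by_contra hcon
    push_neg at hcon
    have hAF : A ∉ F := by
      intro hAF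
      have := hcon A hAF
      rw [Finset.inter_self, hA.2] at this
      omega
    have : insert A F ∈ 𝒞 := by
      rw [h𝒞, mem_filter]
      refine ⟨mem_univ _, ?_, ?_⟩
      · intro X hX
        rcases mem_insert.mp hX with rfl | hX
        · exact hA.2
        · exact hFcard X hX
      · intro X hX Y hY hXY
        rcases mem_insert.mp hX with rfl | hX'
        · rcases mem_insert.mp hY with rfl | hY'
          · exact absurd rfl hXY
          · exact hcon Y hY'
        · rcases mem_insert.mp hY with rfl | hY'
          · rw [Finset.inter_comm]; exact hcon X hX'
          · exact hFint X hX' Y hY' hXY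
    have hle := hFmax _ this
    rw [card_insert_of_notMem hAF] at hle
    omega
  -- counting
  set T : Finset (Finset (Fin m)) :=
      (range (h+1)).biUnion (fun k => powersetCard k (univ : Finset (Fin m))) with hT
  have hTcard : T.card ≤ (h + 1) * m.choose h := by
    refine le_trans (card_biUnion_le) ?_
    have : ∀ k ∈ range (h+1), (powersetCard k (univ : Finset (Fin m))).card ≤ m.choose h := by
      intro k hk
      rw [Finset.mem_range] at hk
      rw [card_powersetCard, card_univ, Fintype.card_fin]
      exact choose_mono_half m (by omega) (by omega)
    calc ∑ k ∈ range (h+1), (powersetCard k (univ : Finset (Fin m))).card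
        ≤ ∑ _k ∈ range (h+1), m.choose h := sum_le_sum this
      _ = (h+1) * m.choose h := by rw [sum_const, card_range, smul_eq_mul]
  have hNB : ∀ B ∈ F, ((powersetCard s (univ : Finset (Fin m))).filter
      (fun A => s < 2 * (A ∩ B).card)).card ≤ 2^s * ((h+1) * m.choose h) := by
    intro B hB
    have hBcard := hFcard B hB
    have hinj : ∀ A ∈ (powersetCard s (univ : Finset (Fin m))).filter
        (fun A => s < 2 * (A ∩ B).card), (A ∩ B, A \ B) ∈ B.powerset ×ˢ T := by
      intro A hA
      rw [mem_filter, mem_powersetCard] at hA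
      obtain ⟨⟨-, hAs⟩, hint⟩ := hA
      rw [Finset.mem_product, Finset.mem_powerset, hT, Finset.mem_biUnion]
      refine ⟨inter_subset_right, (A \ B).card, ?_, ?_⟩
      · rw [Finset.mem_range]
        have h1 : (A \ B).card + (A ∩ B).card = A.card := card_sdiff_add_card_inter A B
        omega
      · rw [mem_powersetCard]; exact ⟨subset_univ _, rfl⟩
    have := card_le_card_of_injOn _ hinj ?_
    · calc _ ≤ (B.powerset ×ˢ T).card := this
        _ = 2^s * T.card := by rw [card_product, card_powerset, hBcard]
        _ ≤ 2^s * ((h+1) * m.choose h) := Nat.mul_le_mul_left _ hTcard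
    · intro A1 h1 A2 h2 heq
      have e1 : A1 ∩ B = A2 ∩ B := congrArg Prod.fst heq
      have e2 : A1 \ B = A2 \ B := congrArg Prod.snd heq
      have : A1 ∩ B ∪ A1 \ B = A2 ∩ B ∪ A2 \ B := by rw [e1, e2]
      calc A1 = A1 \ B ∪ A1 ∩ B := (Finset.sdiff_union_inter _ _).symm
        _ = A2 \ B ∪ A2 ∩ B := by rw [e1, e2]
        _ = A2 := Finset.sdiff_union_inter _ _
  have hcount : m.choose s ≤ F.card * (2^s * ((h+1) * m.choose h)) := by
    have hsub : powersetCard s (univ : Finset (Fin m)) ⊆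
        F.biUnion (fun B => (powersetCard s (univ : Finset (Fin m))).filter
          (fun A => s < 2 * (A ∩ B).card)) := by
      intro A hA
      rw [Finset.mem_biUnion]
      obtain ⟨B, hB, hint⟩ := hcover A hA
      exact ⟨B, hB, mem_filter.mpr ⟨hA, hint⟩⟩
    calc m.choose s = (powersetCard s (univ : Finset (Fin m))).card := by
          rw [card_powersetCard, card_univ, Fintype.card_fin]
      _ ≤ _ := card_le_card hsub
      _ ≤ ∑ B ∈ F, ((powersetCard s (univ : Finset (Fin m))).filter
          (fun A => s < 2 * (A ∩ B).card)).card := card_biUnion_le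
      _ ≤ ∑ _B ∈ F, 2^s * ((h+1) * m.choose h) := sum_le_sum hNB
      _ = F.card * (2^s * ((h+1) * m.choose h)) := by rw [sum_const, smul_eq_mul]
  -- real arithmetic
  have hs0 : (0:ℝ) < s := by exact_mod_cast hs
  have hQ1 : (1:ℝ) ≤ (m:ℝ) / (2 * s) := by
    rw [le_div_iff₀ (by positivity)]
    have : (2*s : ℝ) ≤ m := by exact_mod_cast hsm
    linarith
  have hch : (0:ℝ) < m.choose h := by
    exact_mod_cast Nat.choose_pos (by omega)
  have hratio := choose_ratio m s hs hsm (s - h) (by omega)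
  have hcountR : (m.choose s : ℝ) ≤ F.card * (2^s * ((h+1) * m.choose h)) := by
    exact_mod_cast hcount
  set Q := (m:ℝ) / (2 * s) with hQdef
  have key : Q ^ (s - h) ≤ F.card * (2^s * (h+1)) := by
    have h1 : (m.choose h : ℝ) * Q ^ (s - h) ≤ F.card * (2^s * ((h+1) * m.choose h)) := by
      have : s / 2 + (s - h) = s := by omega
      rw [this] at hratio
      exact le_trans hratio hcountR
    have h2 : (F.card : ℝ) * (2^s * ((h+1) * m.choose h)) =
        ((F.card : ℝ) * (2^s * (h+1))) * m.choose h := by ring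
    rw [h2] at h1
    have h3 : Q ^ (s-h) * (m.choose h : ℝ) ≤ ((F.card : ℝ) * (2^s * (h+1))) * m.choose h := by
      linarith [h1]
    exact le_of_mul_le_mul_right h3 hch
  have h4s : (2:ℝ)^s * (h+1) ≤ 4^s := by
    have h1 : (h:ℝ) + 1 ≤ 2^s := by
      have : h + 1 ≤ 2^s := le_trans (by omega) (Nat.lt_two_pow_self (n := s)).le
      exact_mod_cast this
    calc (2:ℝ)^s * (h+1) ≤ 2^s * 2^s := by nlinarith [pow_pos (by norm_num : (0:ℝ) < 2) s]
      _ = 4^s := by rw [← mul_pow]; norm_num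
  have key2 : Q ^ (s - h) ≤ F.card * 4^s := by
    refine le_trans key ?_
    have : (0:ℝ) ≤ F.card := Nat.cast_nonneg _
    nlinarith [h4s, pow_pos (by norm_num : (0:ℝ) < 2) s]
  have keyr : Q ^ ((s:ℝ)/2) ≤ F.card * 4^s := by
    refine le_trans ?_ key2
    rw [← Real.rpow_natCast Q (s - h)]
    apply Real.rpow_le_rpow_of_exponent_le hQ1
    have : 2 * (s - h) ≥ s := by omega
    have : (s:ℝ) ≤ 2 * ((s-h : ℕ):ℝ) := by exact_mod_cast this
    linarith
  have h16 : (16:ℝ) ^ ((s:ℝ)/2) = 4^s := by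
    rw [show (16:ℝ) = (4:ℝ)^(2:ℕ) by norm_num, ← Real.rpow_natCast (4:ℝ) 2,
        ← Real.rpow_mul (by norm_num : (0:ℝ) ≤ 4), ← Real.rpow_natCast (4:ℝ) s]
    congr 1
    push_cast
    ring
  have hQnn : (0:ℝ) ≤ Q := le_trans zero_le_one hQ1
  have hQ16 : (m : ℝ) / (32 * s) = Q / 16 := by
    rw [hQdef, div_div]; congr 1; ring
  have hfin : ((m : ℝ) / (32 * s)) ^ ((s : ℝ) / 2) = Q ^ ((s:ℝ)/2) / 4^s := by
    rw [hQ16, Real.div_rpow hQnn (by norm_num : (0:ℝ) ≤ 16), h16]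
  rw [hfin, div_le_iff₀ (by positivity)]
  linarith [keyr]


theorem main_geom (d m s : ℕ) (v : Fin m → (Fin d → ℝ)) (P : Set (Fin d → ℝ))
    (hs1 : 1 ≤ s) (hsd : 2 * s ≤ d) (hdm : d ≤ m)
    (hP : P = convexHull ℝ (Set.range v ∪ Set.range (fun i => -v i)))
    (hint : (interior P).Nonempty)
    (hface : ∀ (I : Finset (Fin m)) (δ : Fin m → ℝ), I.card ≤ 2 * s →
          (∀ i, δ i = 1 ∨ δ i = -1) →
          ∃ a : Fin d → ℝ, ∃ c : ℝ,
            (∀ x ∈ P, ∑ j, a j * x j ≤ c) ∧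
            {x ∈ P | ∑ j, a j * x j = c} = convexHull ℝ ((fun i => δ i • v i) '' I) ∧
            convexHull ℝ ((fun i => δ i • v i) '' I) ≠ P)
    (F : Finset (Finset (Fin m)))
    (hFcard : ∀ A ∈ F, A.card = s)
    (hFint : ∀ A ∈ F, ∀ B ∈ F, A ≠ B → 2 * (A ∩ B).card ≤ s) :
    (F.card : ℝ) ≤ (3:ℝ) ^ d := by
  classical
  have hs0 : (0:ℝ) < s := by exact_mod_cast hs1
  have hconv : Convex ℝ P := hP ▸ convex_convexHull ℝ _
  -- symmetry of P
  have hSsymm : -(Set.range v ∪ Set.range (fun i => -v i)) =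
      Set.range v ∪ Set.range (fun i => -v i) := by
    ext x
    simp only [Set.mem_neg, Set.mem_union, Set.mem_range]
    constructor
    · rintro (⟨i, hi⟩ | ⟨i, hi⟩)
      · right; exact ⟨i, by rw [hi, neg_neg]⟩
      · left; exact ⟨i, by rw [← neg_eq_iff_eq_neg] at hi; rw [← hi, neg_neg]⟩
    · rintro (⟨i, hi⟩ | ⟨i, hi⟩)
      · right; exact ⟨i, by rw [hi]⟩
      · left; exact ⟨i, by rw [neg_eq_iff_eq_neg.mpr hi.symm]⟩
  have hPsymm : ∀ x ∈ P, -x ∈ P := by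
    intro x hx
    rw [hP] at hx ⊢
    have : -x ∈ -convexHull ℝ (Set.range v ∪ Set.range (fun i => -v i)) := by
      simpa using hx
    rwa [← convexHull_neg, hSsymm] at this
  have hPneg : -P = P := by
    ext x; simp only [Set.mem_neg]
    exact ⟨fun h => by simpa using hPsymm _ h, fun h => hPsymm x h⟩
  have hintsymm : ∀ x ∈ interior P, -x ∈ interior P := by
    intro x hx
    have h1 : -x ∈ (Homeomorph.neg (Fin d → ℝ)) '' interior P := ⟨x, hx, rfl⟩
    rw [Homeomorph.image_interior] at h1
    have h2 : (Homeomorph.neg (Fin d → ℝ)) '' P = P := by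
      rw [show ⇑(Homeomorph.neg (Fin d → ℝ)) = (Neg.neg : (Fin d → ℝ) → _) from rfl,
        Set.image_neg_eq_neg, hPneg]
    rwa [h2] at h1
  have hzero : (0 : Fin d → ℝ) ∈ interior P := by
    obtain ⟨x₀, hx₀⟩ := hint
    have hconvint : Convex ℝ (interior P) := hconv.interior
    have := hconvint hx₀ (hintsymm _ hx₀) (by norm_num : (0:ℝ) ≤ 1/2)
      (by norm_num : (0:ℝ) ≤ 1/2) (by norm_num)
    simpa [smul_neg] using this
  have h0P : (0 : Fin d → ℝ) ∈ P := interior_subset hzero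
  -- vertices in P
  have hvP : ∀ i, v i ∈ P := fun i => hP ▸ subset_convexHull ℝ _ (Or.inl ⟨i, rfl⟩)
  -- compactness
  have hcompact : IsCompact P := by
    rw [hP]
    exact Set.Finite.isCompact_convexHull ℝ
      ((Set.finite_range v).union (Set.finite_range _))
  -- KEY CLAIM
  have claim : ∀ A B : Finset (Fin m), A.card = s → B.card = s → A ≠ B →
      2 * (A ∩ B).card ≤ s →
      (s:ℝ)⁻¹ • ((∑ i ∈ A, v i) - ∑ i ∈ B, v i) ∉ interior P := by
    intro A B hA hB hAB hABint hqint
    set q : Fin d → ℝ := (s:ℝ)⁻¹ • ((∑ i ∈ A, v i) - ∑ i ∈ B, v i) with hqdef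
    set I : Finset (Fin m) := A \ B ∪ B \ A with hI
    set δ : Fin m → ℝ := fun i => if i ∈ B then -1 else 1 with hδdef
    have hδ : ∀ i, δ i = 1 ∨ δ i = -1 := by
      intro i; by_cases h : i ∈ B <;> simp [hδdef, h]
    have hdisjI : Disjoint (A \ B) (B \ A) := disjoint_sdiff_sdiff
    have hcardA : (A \ B).card + (A ∩ B).card = A.card := card_sdiff_add_card_inter A B
    have hcardB : (B \ A).card + (B ∩ A).card = B.card := card_sdiff_add_card_inter B A
    have hBAint : (B ∩ A).card = (A ∩ B).card := by rw [Finset.inter_comm]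
    have hIcard : I.card = (A \ B).card + (B \ A).card := card_union_of_disjoint hdisjI
    have hIle : I.card ≤ 2 * s := by omega
    have hIge : s ≤ I.card := by omega
    -- sum identity
    have hsum : ∑ i ∈ I, δ i • v i = (∑ i ∈ A, v i) - ∑ i ∈ B, v i := by
      rw [hI, sum_union hdisjI]
      have h1 : ∑ i ∈ A \ B, δ i • v i = ∑ i ∈ A \ B, v i := by
        apply sum_congr rfl
        intro i hi
        have : i ∉ B := (mem_sdiff.mp hi).2
        simp [hδdef, this]
      have h2 : ∑ i ∈ B \ A, δ i • v i = -∑ i ∈ B \ A, v i := by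
        rw [← sum_neg_distrib]
        apply sum_congr rfl
        intro i hi
        have : i ∈ B := (mem_sdiff.mp hi).1
        simp [hδdef, this]
      rw [h1, h2]
      have hA' : ∑ i ∈ A, v i = (∑ i ∈ A \ B, v i) + ∑ i ∈ A ∩ B, v i := by
        rw [← sum_union (disjoint_sdiff_inter A B), Finset.sdiff_union_inter]
      have hB' : ∑ i ∈ B, v i = (∑ i ∈ B \ A, v i) + ∑ i ∈ B ∩ A, v i := by
        rw [← sum_union (disjoint_sdiff_inter B A), Finset.sdiff_union_inter]
      rw [hA', hB', inter_comm B A]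
      abel
    obtain ⟨a, c, hsup, hfaceeq, hne⟩ := hface I δ hIle hδ
    have hpts : ∀ i ∈ I, (δ i • v i) ∈ P ∧ ∑ j, a j * (δ i • v i) j = c := by
      intro i hi
      have h1 : (δ i • v i) ∈ convexHull ℝ ((fun i => δ i • v i) '' (I : Set (Fin m))) :=
        subset_convexHull ℝ _ (Set.mem_image_of_mem _ (Finset.mem_coe.mpr hi))
      rw [← hfaceeq] at h1
      exact ⟨h1.1, h1.2⟩
    have haq : ∑ j, a j * q j = ((I.card : ℝ) / s) * c := by
      have hq2 : ∀ j, q j = (s:ℝ)⁻¹ * ∑ i ∈ I, δ i * v i j := by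
        intro j
        rw [hqdef, ← hsum]
        simp [Finset.sum_apply]
      calc ∑ j, a j * q j
          = ∑ j, (s:ℝ)⁻¹ * (a j * ∑ i ∈ I, δ i * v i j) := by
            apply Finset.sum_congr rfl; intro j _; rw [hq2 j]; ring
        _ = (s:ℝ)⁻¹ * ∑ j, (a j * ∑ i ∈ I, δ i * v i j) := (Finset.mul_sum _ _ _).symm
        _ = (s:ℝ)⁻¹ * ∑ j, ∑ i ∈ I, a j * (δ i * v i j) := by
            congr 1; exact Finset.sum_congr rfl (fun j _ => Finset.mul_sum _ _ _)
        _ = (s:ℝ)⁻¹ * ∑ i ∈ I, ∑ j, a j * (δ i * v i j) := by rw [Finset.sum_comm]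
        _ = (s:ℝ)⁻¹ * ∑ i ∈ I, c := by
            congr 1
            apply Finset.sum_congr rfl
            intro i hi
            rw [← (hpts i hi).2]
            apply Finset.sum_congr rfl
            intro j _
            simp
        _ = ((I.card : ℝ) / s) * c := by rw [Finset.sum_const, nsmul_eq_mul]; ring
    have hc0 : 0 ≤ c := by
      have := hsup 0 h0P
      simpa using this
    have hqP : q ∈ P := interior_subset hqint
    have hle : ∑ j, a j * q j ≤ c := hsup q hqP
    have hIs : (1:ℝ) ≤ (I.card : ℝ) / s := by
      rw [le_div_iff₀ hs0]
      have : (s:ℝ) ≤ I.card := by exact_mod_cast hIge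
      linarith
    have hcq : ∑ j, a j * q j = c := by
      have : c ≤ ((I.card : ℝ) / s) * c := le_mul_of_one_le_left hc0 hIs
      linarith [haq, hle]
    by_cases ha : a = 0
    · have hc : c = 0 := by rw [← hcq]; simp [ha]
      apply hne
      rw [← hfaceeq]
      ext x
      simp [ha, hc]
    · have hnorm : 0 < ∑ j, a j * a j := by
        obtain ⟨j0, hj0⟩ := Function.ne_iff.mp ha
        exact Finset.sum_pos' (fun j _ => mul_self_nonneg _)
          ⟨j0, Finset.mem_univ _, mul_self_pos.mpr hj0⟩
      have hanorm : 0 < ‖a‖ := norm_pos_iff.mpr ha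
      obtain ⟨ε, hε, hball⟩ := Metric.mem_nhds_iff.mp (isOpen_interior.mem_nhds hqint)
      set r : ℝ := ε / (2 * ‖a‖) with hr
      have hr0 : 0 < r := by positivity
      have hx : q + r • a ∈ P := by
        apply interior_subset (hball _)
        rw [Metric.mem_ball, dist_eq_norm, add_sub_cancel_left, norm_smul, Real.norm_eq_abs,
          abs_of_pos hr0, hr, div_mul_eq_mul_div, div_lt_iff₀ (by positivity)]
        nlinarith
      have hcontr := hsup _ hx
      have hexp : ∑ j, a j * (q + r • a) j = (∑ j, a j * q j) + r * ∑ j, a j * a j := by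
        rw [Finset.mul_sum, ← Finset.sum_add_distrib]
        apply Finset.sum_congr rfl
        intro j _
        simp only [Pi.add_apply, Pi.smul_apply, smul_eq_mul]
        ring
      rw [hexp, hcq] at hcontr
      nlinarith
  -- translates
  set u : Finset (Fin m) → (Fin d → ℝ) := fun A => (2/(s:ℝ)) • ∑ i ∈ A, v i with hu
  set T : Finset (Fin m) → Set (Fin d → ℝ) := fun A => (fun x => x - u A) ⁻¹' (interior P)
    with hT
  have hTopen : ∀ A, IsOpen (T A) :=
    fun A => isOpen_interior.preimage (continuous_id.sub continuous_const)
  have hdisj : (↑F : Set (Finset (Fin m))).PairwiseDisjoint T := by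
    intro A hA B hB hAB
    rw [Function.onFun, Set.disjoint_left]
    intro z hzA hzB
    have hx : z - u A ∈ interior P := hzA
    have hy : z - u B ∈ interior P := hzB
    apply claim A B (hFcard A hA) (hFcard B hB) hAB (hFint A hA B hB hAB)
    have h1 : (2:ℝ)⁻¹ • (z - u B) + (2:ℝ)⁻¹ • (-(z - u A)) = (2:ℝ)⁻¹ • (u A - u B) := by
      rw [← smul_add]
      congr 1
      abel
    have h2 : (2:ℝ)⁻¹ • (u A - u B) = (s:ℝ)⁻¹ • ((∑ i ∈ A, v i) - ∑ i ∈ B, v i) := by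
      simp only [hu]
      rw [← smul_sub, smul_smul]
      congr 1
      rw [div_eq_mul_inv]
      ring
    rw [← h2, ← h1]
    exact hconv.interior hy (hintsymm _ hx) (by norm_num) (by norm_num) (by norm_num)
  -- measure computation
  have hμfrontier : volume (frontier P) = 0 := hconv.addHaar_frontier volume
  have hμP_eq : volume P = volume (interior P) := by
    apply le_antisymm
    · calc volume P ≤ volume (interior P ∪ frontier P) := by
            apply measure_mono
            rw [← closure_eq_interior_union_frontier]
            exact subset_closure
        _ ≤ volume (interior P) + volume (frontier P) := measure_union_le _ _
        _ = volume (interior P) := by rw [hμfrontier, add_zero]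
    · exact measure_mono interior_subset
  have hμIpos : 0 < volume (interior P) := isOpen_interior.measure_pos volume hint
  have hμPfin : volume P < ⊤ := hcompact.measure_lt_top
  have hμIfin : volume (interior P) ≠ ⊤ :=
    (lt_of_le_of_lt (measure_mono interior_subset) hμPfin).ne
  have hμT : ∀ A, volume (T A) = volume (interior P) := by
    intro A
    have h1 : T A = (fun x => x + (-u A)) ⁻¹' (interior P) := by
      rw [hT]; simp only [sub_eq_add_neg]
    rw [h1]
    exact measure_preimage_add_right volume (-u A) _
  have h2P : ∀ A ∈ F, u A ∈ (2:ℝ) • P := by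
    intro A hA
    have hcA : A.card = s := hFcard A hA
    have hmem : (s:ℝ)⁻¹ • ∑ i ∈ A, v i ∈ P := by
      rw [Finset.smul_sum]
      apply hconv.sum_mem (fun i _ => by positivity)
      · rw [Finset.sum_const, hcA, nsmul_eq_mul]
        rw [mul_inv_cancel₀ hs0.ne']
      · exact fun i _ => hvP i
    have h1 : u A = (2:ℝ) • ((s:ℝ)⁻¹ • ∑ i ∈ A, v i) := by
      simp only [hu]
      rw [smul_smul]
      congr 1
    rw [h1]
    exact Set.smul_mem_smul_set hmem
  have h3P : ∀ A ∈ F, T A ⊆ (3:ℝ) • P := by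
    intro A hA z hz
    have h1 : z - u A ∈ P := interior_subset hz
    have h2 : (3:ℝ) • P = P + (2:ℝ) • P := by
      have h := hconv.add_smul (by norm_num : (0:ℝ) ≤ 1) (by norm_num : (0:ℝ) ≤ 2)
      rw [show (1:ℝ) + 2 = 3 by norm_num, one_smul] at h
      exact h
    rw [h2]
    have h4 := Set.add_mem_add h1 (h2P A hA)
    rwa [sub_add_cancel] at h4
  have hcount : (F.card : ℝ≥0∞) * volume (interior P)
      ≤ ENNReal.ofReal ((3:ℝ)^d) * volume (interior P) := by
    have hmeas : ∀ A ∈ F, MeasurableSet (T A) := fun A _ => (hTopen A).measurableSet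
    have h1 : volume (⋃ A ∈ F, T A) = ∑ A ∈ F, volume (T A) :=
      measure_biUnion_finset hdisj hmeas
    have h2 : ∑ A ∈ F, volume (T A) = F.card * volume (interior P) := by
      rw [Finset.sum_congr rfl (fun A _ => hμT A), Finset.sum_const, nsmul_eq_mul]
    have h3 : volume (⋃ A ∈ F, T A) ≤ volume ((3:ℝ) • P) :=
      measure_mono (Set.iUnion₂_subset h3P)
    have h4 : volume ((3:ℝ) • P) = ENNReal.ofReal ((3:ℝ)^d) * volume P := by
      rw [Measure.addHaar_smul]
      congr 2
      rw [Module.finrank_fin_fun]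
      rw [abs_of_pos (by positivity)]
    calc (F.card : ℝ≥0∞) * volume (interior P) = ∑ A ∈ F, volume (T A) := h2.symm
      _ = volume (⋃ A ∈ F, T A) := h1.symm
      _ ≤ volume ((3:ℝ) • P) := h3
      _ = ENNReal.ofReal ((3:ℝ)^d) * volume (interior P) := by rw [h4, hμP_eq]
  have hcard : (F.card : ℝ≥0∞) ≤ ENNReal.ofReal ((3:ℝ)^d) :=
    (ENNReal.mul_le_mul_iff_left hμIpos.ne' hμIfin).mp hcount
  rw [← ENNReal.ofReal_natCast] at hcard
  exact (ENNReal.ofReal_le_ofReal_iff (by positivity)).mp hcard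


/-- There are absolute constants C, C₂ > 0 such that any 2s-neighborly centrally
symmetric d-polytope with 2m vertices (2s ≤ d ≤ m) satisfies 3^d ≥ (Cm/s)^{s/2}
and consequently s ≤ C₂·d/(1 + log(m/d)). -/
theorem neighborliness_upper_bound :
    ∃ C C₂ : ℝ, 0 < C ∧ 0 < C₂ ∧
      ∀ (d m s : ℕ) (v : Fin m → (Fin d → ℝ)) (P : Set (Fin d → ℝ)),
        1 ≤ s → 2 * s ≤ d → d ≤ m →
        P = convexHull ℝ (Set.range v ∪ Set.range (fun i => -v i)) →
        (interior P).Nonempty →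
        (∀ (I : Finset (Fin m)) (δ : Fin m → ℝ), I.card ≤ 2 * s →
          (∀ i, δ i = 1 ∨ δ i = -1) →
          ∃ a : Fin d → ℝ, ∃ c : ℝ,
            (∀ x ∈ P, ∑ j, a j * x j ≤ c) ∧
            {x ∈ P | ∑ j, a j * x j = c} = convexHull ℝ ((fun i => δ i • v i) '' I) ∧
            convexHull ℝ ((fun i => δ i • v i) '' I) ≠ P) →
        (C * m / s) ^ ((s : ℝ) / 2) ≤ (3 : ℝ) ^ d ∧
        (s : ℝ) ≤ C₂ * d / (1 + Real.log ((m : ℝ) / d)) := by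
  refine ⟨1/32, 100, by norm_num, by norm_num, ?_⟩
  intro d m s v P hs1 hsd hdm hP hint hface
  obtain ⟨F, hFcard, hFint, hFlb⟩ := pack_lemma m s hs1 (le_trans hsd hdm)
  have hub : (F.card : ℝ) ≤ (3:ℝ)^d :=
    main_geom d m s v P hs1 hsd hdm hP hint hface F hFcard hFint
  have hrw : (1/32 * (m:ℝ)) / s = (m:ℝ) / (32 * s) := by ring
  have hpow : ((m:ℝ) / (32 * s)) ^ ((s:ℝ)/2) ≤ (3:ℝ)^d := le_trans hFlb hub
  constructor
  · rw [hrw]; exact hpow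
  -- second conclusion
  have hs0 : (0:ℝ) < s := by exact_mod_cast hs1
  have hd0 : (0:ℝ) < d := by
    have : 1 ≤ d := by omega
    exact_mod_cast Nat.lt_of_lt_of_le Nat.zero_lt_one this
  have hm0 : (0:ℝ) < m := lt_of_lt_of_le hd0 (by exact_mod_cast hdm)
  set L := Real.log ((m:ℝ)/d) with hL
  have hmd1 : (1:ℝ) ≤ (m:ℝ)/d := by
    rw [le_div_iff₀ hd0, one_mul]
    exact_mod_cast hdm
  have hL0 : 0 ≤ L := Real.log_nonneg hmd1
  have hsd' : 2*(s:ℝ) ≤ d := by exact_mod_cast hsd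
  rw [le_div_iff₀ (by linarith : (0:ℝ) < 1 + L)]
  by_cases hc : L ≤ 9
  · nlinarith
  · push_neg at hc
    -- logarithmic estimates
    have hlog2 : Real.log 2 < 0.6931471808 := Real.log_two_lt_d9
    have hlog2' : 0 < Real.log 2 := Real.log_pos (by norm_num)
    have hlog16 : Real.log 16 = 4 * Real.log 2 := by
      rw [show (16:ℝ) = 2^(4:ℕ) by norm_num, Real.log_pow]
      norm_num
    have hlog3 : Real.log 3 ≤ 2 * Real.log 2 := by
      rw [show (2:ℝ) * Real.log 2 = Real.log (2^(2:ℕ)) by rw [Real.log_pow]; norm_num]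
      apply Real.log_le_log (by norm_num)
      norm_num
    have hXpos : (0:ℝ) < (m:ℝ)/(32*s) := by positivity
    have h32s : (32:ℝ)*s ≤ 16*d := by linarith
    have hlog32s : Real.log (32*s) ≤ Real.log 16 + Real.log d := by
      rw [← Real.log_mul (by norm_num) hd0.ne']
      apply Real.log_le_log (by positivity)
      linarith
    have hLdiv : L = Real.log m - Real.log d := by
      rw [hL, Real.log_div hm0.ne' hd0.ne']
    have hXlog : L - 3 ≤ Real.log ((m:ℝ)/(32*s)) := by
      rw [Real.log_div hm0.ne' (by positivity : (32:ℝ)*s ≠ 0)]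
      have : Real.log 16 ≤ 3 := by nlinarith
      linarith
    -- take logs of hpow
    have hlogpow : (s:ℝ)/2 * Real.log ((m:ℝ)/(32*s)) ≤ d * Real.log 3 := by
      have h1 := Real.log_le_log (Real.rpow_pos_of_pos hXpos _) hpow
      rwa [Real.log_rpow hXpos, Real.log_pow] at h1
    have hhalf : (1+L)/2 ≤ L - 3 := by linarith
    have hmain : (s:ℝ)/2 * ((1+L)/2) ≤ d * Real.log 3 := by
      have h2 : (s:ℝ)/2 * ((1+L)/2) ≤ (s:ℝ)/2 * (L-3) :=
        mul_le_mul_of_nonneg_left hhalf (by positivity)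
      have h3 : (s:ℝ)/2 * (L-3) ≤ (s:ℝ)/2 * Real.log ((m:ℝ)/(32*s)) :=
        mul_le_mul_of_nonneg_left hXlog (by positivity)
      linarith
    nlinarith
end

section
/- Let L be an n-dimensional subspace of ℝ^m (codimension d = m − n) such that ‖x‖_2 ≤ C̃·√((1 + log(m/d))/d)·‖x‖_1 for all x ∈ L. Let v̄_1,...,v̄_m ∈ ℝ^n be the rows of a matrix representing an injective linear map T : ℝ^n → ℝ^m with image L. Then for every k < d/(4C̃²(1 + log(m/d))) and every k-element subset I ⊆ {1,...,m} and every u ≠ 0 in ℝ^n: Σ_{i∈I} |⟨v̄_i, u⟩| < (1/2)·Σ_{l=1}^m |⟨v̄_l, u⟩|. -/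
/-- Rows of a matrix representing an injective map onto a Garnaev–Gluskin subspace
have no dominant subsets of size k < d/(4C̃²(1+log(m/d))). -/
theorem garnaev_gluskin_rows_no_small_dominant_subsets
    (n m d : ℕ) (hm : n + d = m) (hd : 0 < d) (Ct : ℝ) (hCt : 0 < Ct)
    (v : Fin m → (Fin n → ℝ))
    (hinj : ∀ u : Fin n → ℝ, (∀ i, ∑ j, v i j * u j = 0) → u = 0)
    (hL : ∀ u : Fin n → ℝ, Real.sqrt (∑ i, (∑ j, v i j * u j) ^ 2) ≤
      Ct * Real.sqrt ((1 + Real.log ((m : ℝ) / d)) / d) * ∑ i, |∑ j, v i j * u j|) :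
    ∀ (k : ℕ) (I : Finset (Fin m)) (u : Fin n → ℝ),
      (k : ℝ) < (d : ℝ) / (4 * Ct ^ 2 * (1 + Real.log ((m : ℝ) / d))) →
      I.card = k → u ≠ 0 →
      ∑ i ∈ I, |∑ j, v i j * u j| < (1 / 2) * ∑ i, |∑ j, v i j * u j| := by
  intro k I u hk hcard hu
  set a : Fin m → ℝ := fun i => ∑ j, v i j * u j with ha
  have hdpos : (0:ℝ) < d := by exact_mod_cast hd
  have hL1 : 0 < 1 + Real.log ((m:ℝ)/d) := by
    have hdm : (d:ℝ) ≤ m := by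
      have : d ≤ m := by omega
      exact_mod_cast this
    have h1 : (1:ℝ) ≤ (m:ℝ)/d := by rw [le_div_iff₀ hdpos]; linarith
    have := Real.log_nonneg h1
    linarith
  set L := 1 + Real.log ((m:ℝ)/d) with hLdef
  have hS1nonneg : ∀ i ∈ Finset.univ, (0:ℝ) ≤ |a i| := fun i _ => abs_nonneg _
  have hS1 : 0 < ∑ i, |a i| := by
    rcases (Finset.sum_nonneg hS1nonneg).lt_or_eq with h | h
    · exact h
    · exfalso
      apply hu
      apply hinj
      intro i
      have := (Finset.sum_eq_zero_iff_of_nonneg hS1nonneg).mp h.symm i (Finset.mem_univ i)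
      exact abs_eq_zero.mp this
  -- Cauchy-Schwarz on I
  have hsq : (∑ i ∈ I, |a i|) ^ 2 ≤ (k:ℝ) * ∑ i, (a i) ^ 2 := by
    have h1 : (∑ i ∈ I, |a i|) ^ 2 ≤ (I.card : ℝ) * ∑ i ∈ I, |a i| ^ 2 :=
      sq_sum_le_card_mul_sum_sq
    have h2 : ∑ i ∈ I, |a i| ^ 2 ≤ ∑ i, (a i) ^ 2 := by
      calc ∑ i ∈ I, |a i| ^ 2 = ∑ i ∈ I, (a i) ^ 2 := by simp [sq_abs]
        _ ≤ ∑ i, (a i) ^ 2 :=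
          Finset.sum_le_sum_of_subset_of_nonneg (Finset.subset_univ I)
            (fun i _ _ => sq_nonneg _)
    calc (∑ i ∈ I, |a i|) ^ 2 ≤ (I.card : ℝ) * ∑ i ∈ I, |a i| ^ 2 := h1
      _ ≤ (k:ℝ) * ∑ i, (a i) ^ 2 := by
        rw [hcard]
        exact mul_le_mul_of_nonneg_left h2 (Nat.cast_nonneg k)
  have hcs : ∑ i ∈ I, |a i| ≤ Real.sqrt k * Real.sqrt (∑ i, (a i) ^ 2) := by
    rw [← Real.sqrt_mul (Nat.cast_nonneg k)]
    have h := Real.sqrt_le_sqrt hsq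
    rwa [Real.sqrt_sq (Finset.sum_nonneg (fun i _ => abs_nonneg _))] at h
  have hLbound := hL u
  have hkey : Real.sqrt k * (Ct * Real.sqrt (L / d)) < 1 / 2 := by
    have hc : 0 ≤ Real.sqrt k * (Ct * Real.sqrt (L / d)) := by positivity
    have hsq2 : (Real.sqrt k * (Ct * Real.sqrt (L / d))) ^ 2 < (1/2) ^ 2 := by
      have h1 : (Real.sqrt k * (Ct * Real.sqrt (L / d))) ^ 2
          = (k:ℝ) * (Ct ^ 2 * (L / d)) := by
        rw [mul_pow, mul_pow, Real.sq_sqrt (Nat.cast_nonneg k),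
          Real.sq_sqrt (by positivity : (0:ℝ) ≤ L / d)]
      rw [h1]
      have h2 : (k:ℝ) * (Ct ^ 2 * (L / d)) < (d / (4 * Ct ^ 2 * L)) * (Ct ^ 2 * (L / d)) :=
        mul_lt_mul_of_pos_right hk (by positivity)
      have h3 : (d:ℝ) / (4 * Ct ^ 2 * L) * (Ct ^ 2 * (L / d)) = 1 / 4 := by
        field_simp
      rw [h3] at h2
      norm_num at h2 ⊢
      linarith
    exact lt_of_pow_lt_pow_left₀ 2 (by norm_num) hsq2
  calc ∑ i ∈ I, |a i| ≤ Real.sqrt k * Real.sqrt (∑ i, (a i) ^ 2) := hcs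
    _ ≤ Real.sqrt k * (Ct * Real.sqrt (L / d) * ∑ i, |a i|) :=
        mul_le_mul_of_nonneg_left hLbound (Real.sqrt_nonneg _)
    _ = (Real.sqrt k * (Ct * Real.sqrt (L / d))) * ∑ i, |a i| := by ring
    _ < (1 / 2) * ∑ i, |a i| := mul_lt_mul_of_pos_right hkey hS1
end

section
/- The volume ratio R of the d-dimensional cross-polytope satisfies R = (vol(√d·B₁^d)/vol(B₂^d))^{1/d} = (2^d·d^{d/2}/d! · Γ(d/2+1)/π^{d/2})^{1/d} ≤ √(2e/π). -/
open MeasureTheory Pointwise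

open Real

lemma stirling_sqrtpi_le (n : ℕ) (hn : 1 ≤ n) : Real.sqrt π ≤ Stirling.stirlingSeq n := by
  obtain ⟨m, rfl⟩ := Nat.exists_eq_add_of_le hn
  have := (Stirling.stirlingSeq'_antitone.le_of_tendsto
    (Stirling.tendsto_stirlingSeq_sqrt_pi.comp (Filter.tendsto_add_atTop_nat 1))) m
  simpa [Function.comp, Nat.succ_eq_add_one, Nat.add_comm] using this

lemma stirling_le_e_div_sqrt2 (n : ℕ) (hn : 1 ≤ n) :
    Stirling.stirlingSeq n ≤ Real.exp 1 / Real.sqrt 2 := by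
  obtain ⟨m, rfl⟩ := Nat.exists_eq_add_of_le hn
  have := Stirling.stirlingSeq'_antitone (Nat.zero_le m)
  simpa [Function.comp, Nat.succ_eq_add_one, Nat.add_comm, Stirling.stirlingSeq_one] using this

lemma stirling_denom_pos (n : ℕ) (hn : 1 ≤ n) :
    (0:ℝ) < Real.sqrt (2 * n) * ((n : ℝ) / Real.exp 1) ^ n := by
  have : (0:ℝ) < (n:ℝ) := by exact_mod_cast hn
  positivity

lemma stirling_lower (n : ℕ) (hn : 1 ≤ n) :
    Real.sqrt π * Real.sqrt (2 * n) * (n : ℝ) ^ n ≤ (n.factorial : ℝ) * Real.exp 1 ^ n := by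
  have h1 := stirling_sqrtpi_le n hn
  rw [Stirling.stirlingSeq, le_div_iff₀ (stirling_denom_pos n hn)] at h1
  calc Real.sqrt π * Real.sqrt (2*n) * (n:ℝ)^n
      = Real.sqrt π * (Real.sqrt (2*n) * ((n:ℝ)/Real.exp 1)^n) * Real.exp 1 ^ n := by
        rw [div_pow]; field_simp
    _ ≤ (n.factorial : ℝ) * Real.exp 1 ^ n := by gcongr

lemma stirling_upper (n : ℕ) (hn : 1 ≤ n) :
    (n.factorial : ℝ) * Real.exp 1 ^ n ≤ Real.exp 1 * Real.sqrt n * (n : ℝ) ^ n := by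
  have h1 := stirling_le_e_div_sqrt2 n hn
  rw [Stirling.stirlingSeq, div_le_div_iff₀ (stirling_denom_pos n hn) (by positivity)] at h1
  have h2 : Real.sqrt (2 * n) = Real.sqrt 2 * Real.sqrt n := by
    rw [Real.sqrt_mul (by norm_num)]
  have hs2 : (0:ℝ) < Real.sqrt 2 := by positivity
  calc (n.factorial : ℝ) * Real.exp 1 ^ n
      ≤ Real.exp 1 * (Real.sqrt (2*n) * ((n:ℝ)/Real.exp 1)^n) / Real.sqrt 2 * Real.exp 1 ^ n := by
        rw [div_mul_eq_mul_div, le_div_iff₀ hs2]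
        calc (n.factorial:ℝ) * Real.exp 1 ^ n * Real.sqrt 2
            = (n.factorial:ℝ) * Real.sqrt 2 * Real.exp 1 ^ n := by ring
          _ ≤ Real.exp 1 * (Real.sqrt (2*n) * ((n:ℝ)/Real.exp 1)^n) * Real.exp 1 ^ n :=
              mul_le_mul_of_nonneg_right h1 (by positivity)
    _ = Real.exp 1 * Real.sqrt n * (n:ℝ)^n := by
        rw [h2, div_pow]; field_simp

lemma gamma_mid_sq_le (a b : ℕ) :
    Real.Gamma ((((a:ℝ)+1) + ((b:ℝ)+1))/2) ^ 2 ≤ (a.factorial : ℝ) * b.factorial := by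
  have hx : ((a:ℝ)+1) ∈ Set.Ioi (0:ℝ) := by simp only [Set.mem_Ioi]; positivity
  have hy : ((b:ℝ)+1) ∈ Set.Ioi (0:ℝ) := by simp only [Set.mem_Ioi]; positivity
  have h := Real.convexOn_log_Gamma.2 hx hy (by norm_num : (0:ℝ) ≤ 1/2)
    (by norm_num : (0:ℝ) ≤ 1/2) (by norm_num)
  simp only [Function.comp_apply, smul_eq_mul] at h
  have hmid : (1/2 : ℝ) * ((a:ℝ)+1) + (1/2 : ℝ) * ((b:ℝ)+1) = (((a:ℝ)+1)+((b:ℝ)+1))/2 := by ring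
  rw [hmid] at h
  have hgx : (0:ℝ) < Real.Gamma ((a:ℝ)+1) := Real.Gamma_pos_of_pos (by positivity)
  have hgy : (0:ℝ) < Real.Gamma ((b:ℝ)+1) := Real.Gamma_pos_of_pos (by positivity)
  have hgm : (0:ℝ) < Real.Gamma ((((a:ℝ)+1)+((b:ℝ)+1))/2) := Real.Gamma_pos_of_pos (by positivity)
  have h2 : Real.log (Real.Gamma ((((a:ℝ)+1)+((b:ℝ)+1))/2) ^ 2)
      ≤ Real.log (Real.Gamma ((a:ℝ)+1) * Real.Gamma ((b:ℝ)+1)) := by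
    rw [Real.log_pow, Real.log_mul hgx.ne' hgy.ne']
    push_cast
    linarith
  have := Real.exp_le_exp.mpr h2
  rw [Real.exp_log (by positivity), Real.exp_log (by positivity)] at this
  calc Real.Gamma ((((a:ℝ)+1)+((b:ℝ)+1))/2) ^ 2 ≤ _ := this
    _ = (a.factorial : ℝ) * b.factorial := by
        rw [Real.Gamma_nat_eq_factorial, Real.Gamma_nat_eq_factorial]

lemma e_sq_le_three_pi : Real.exp 1 ^ 2 ≤ 3 * π := by
  have h1 := Real.exp_one_lt_d9
  have h2 := Real.pi_gt_d6
  nlinarith [Real.exp_pos 1]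

lemma key_even (m : ℕ) (hm : 1 ≤ m) :
    (2:ℝ)^(2*m) * (2*(m:ℝ))^(2*m) * (m.factorial:ℝ) * (m.factorial:ℝ)
      ≤ ((2*m).factorial:ℝ)^2 * Real.exp 1 ^ (2*m) := by
  set E := Real.exp 1 with hE
  have hEpos : (0:ℝ) < E := Real.exp_pos 1
  have hmR : (0:ℝ) ≤ (m:ℝ) := Nat.cast_nonneg m
  have hU := stirling_upper m hm
  have hL := stirling_lower (2*m) (by omega)
  have hcast : ((2*m : ℕ):ℝ) = 2*(m:ℝ) := by push_cast; ring
  rw [hcast] at hL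
  have hsm : Real.sqrt (m:ℝ) ^ 2 = (m:ℝ) := Real.sq_sqrt hmR
  have hsp : Real.sqrt π ^ 2 = π := Real.sq_sqrt pi_pos.le
  have hs4 : Real.sqrt (2*(2*(m:ℝ)))^2 = 2*(2*(m:ℝ)) := Real.sq_sqrt (by positivity)
  have ht : (2*(m:ℝ))^(2*m) = 2^(2*m) * ((m:ℝ)^m)^2 := by ring
  rw [← mul_le_mul_iff_of_pos_right (pow_pos hEpos (2*m))]
  calc (2:ℝ)^(2*m) * (2*(m:ℝ))^(2*m) * (m.factorial:ℝ) * (m.factorial:ℝ) * E^(2*m)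
      = (2:ℝ)^(2*m) * (2*(m:ℝ))^(2*m) * ((m.factorial:ℝ) * E^m)^2 := by ring
    _ ≤ (2:ℝ)^(2*m) * (2*(m:ℝ))^(2*m) * (E * Real.sqrt m * (m:ℝ)^m)^2 := by
        exact mul_le_mul_of_nonneg_left (pow_le_pow_left₀ (by positivity) hU 2)
          (by positivity)
    _ = E^2 * (m:ℝ) * ((2*(m:ℝ))^(2*m))^2 := by
        linear_combination (2^(2*m) * (2*(m:ℝ))^(2*m) * E^2 * ((m:ℝ)^m)^2) * hsm
          - E^2 * (m:ℝ) * (2*(m:ℝ))^(2*m) * ht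
    _ ≤ π * (2*(2*(m:ℝ))) * ((2*(m:ℝ))^(2*m))^2 := by
        have hX : (0:ℝ) ≤ ((2*(m:ℝ))^(2*m))^2 := by positivity
        nlinarith [mul_le_mul_of_nonneg_right
          (mul_le_mul_of_nonneg_right e_sq_le_three_pi hmR) hX,
          mul_nonneg (mul_nonneg pi_pos.le hmR) hX]
    _ = (Real.sqrt π * Real.sqrt (2*(2*(m:ℝ))) * (2*(m:ℝ))^(2*m))^2 := by
        linear_combination (-(2*(2*(m:ℝ))) * ((2*(m:ℝ))^(2*m))^2) * hsp
          - (Real.sqrt π^2 * ((2*(m:ℝ))^(2*m))^2) * hs4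
    _ ≤ (((2*m).factorial:ℝ) * E^(2*m))^2 :=
        pow_le_pow_left₀ (by positivity) hL 2
    _ = ((2*m).factorial:ℝ)^2 * E^(2*m) * E^(2*m) := by ring

lemma key_odd (m : ℕ) (hm : 1 ≤ m) :
    (2:ℝ)^(2*m+1) * (2*(m:ℝ)+1)^(2*m+1) * (m.factorial:ℝ) * ((m+1).factorial:ℝ)
      ≤ ((2*m+1).factorial:ℝ)^2 * Real.exp 1 ^ (2*m+1) := by
  set E := Real.exp 1 with hE
  have hEpos : (0:ℝ) < E := Real.exp_pos 1
  have hmR : (0:ℝ) ≤ (m:ℝ) := Nat.cast_nonneg m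
  have hm1 : (1:ℝ) ≤ (m:ℝ) := by exact_mod_cast hm
  set c : ℝ := 2*(m:ℝ)+1 with hc
  have hcpos : (0:ℝ) < c := by positivity
  have hU1 := stirling_upper m hm
  have hU2 := stirling_upper (m+1) (by omega)
  push_cast at hU2
  have hL := stirling_lower (2*m+1) (by omega)
  push_cast at hL
  have hsp : Real.sqrt π ^ 2 = π := Real.sq_sqrt pi_pos.le
  have hsn : Real.sqrt (2*(2*(m:ℝ)+1))^2 = 2*(2*(m:ℝ)+1) := Real.sq_sqrt (by positivity)
  have hprod : Real.sqrt m * Real.sqrt ((m:ℝ)+1) ≤ c/2 := by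
    rw [← Real.sqrt_mul hmR]
    have h1 : (m:ℝ)*((m:ℝ)+1) ≤ (c/2)^2 := by rw [hc]; nlinarith
    calc Real.sqrt ((m:ℝ)*((m:ℝ)+1)) ≤ Real.sqrt ((c/2)^2) := Real.sqrt_le_sqrt h1
      _ = c/2 := Real.sqrt_sq (by positivity)
  rw [← mul_le_mul_iff_of_pos_right (pow_pos hEpos (2*m+1))]
  calc (2:ℝ)^(2*m+1) * c^(2*m+1) * (m.factorial:ℝ) * ((m+1).factorial:ℝ) * E^(2*m+1)
      = 2^(2*m+1) * c^(2*m+1) * ((m.factorial:ℝ) * E^m)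
          * (((m+1).factorial:ℝ) * E^(m+1)) := by ring
    _ ≤ 2^(2*m+1) * c^(2*m+1) * (E * Real.sqrt m * (m:ℝ)^m)
          * (E * Real.sqrt ((m:ℝ)+1) * ((m:ℝ)+1)^(m+1)) := by
        have h1 : (0:ℝ) ≤ 2^(2*m+1) * c^(2*m+1) := by positivity
        have := mul_le_mul hU1 hU2 (by positivity) (by positivity)
        calc 2^(2*m+1) * c^(2*m+1) * ((m.factorial:ℝ) * E^m) * (((m+1).factorial:ℝ) * E^(m+1))
            = (2^(2*m+1) * c^(2*m+1)) * (((m.factorial:ℝ) * E^m) * (((m+1).factorial:ℝ) * E^(m+1))) := by ring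
          _ ≤ (2^(2*m+1) * c^(2*m+1)) * ((E * Real.sqrt m * (m:ℝ)^m) * (E * Real.sqrt ((m:ℝ)+1) * ((m:ℝ)+1)^(m+1))) :=
              mul_le_mul_of_nonneg_left this h1
          _ = _ := by ring
    _ = E^2 * (Real.sqrt m * Real.sqrt ((m:ℝ)+1)) * c^(2*m+1)
          * (((2*(m:ℝ))*(2*(m:ℝ)+2))^m * (2*(m:ℝ)+2)) := by
        rw [mul_pow (2*(m:ℝ)) (2*(m:ℝ)+2) m, mul_pow 2 (m:ℝ) m,
          show (2*(m:ℝ)+2)^m = 2^m * ((m:ℝ)+1)^m by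
            rw [show (2*(m:ℝ)+2) = 2*((m:ℝ)+1) by ring, mul_pow]]
        ring
    _ ≤ E^2 * (c/2) * c^(2*m+1) * ((c^2)^m * ((4/3)*c)) := by
        have h2 : ((2*(m:ℝ))*(2*(m:ℝ)+2))^m ≤ (c^2)^m :=
          pow_le_pow_left₀ (by positivity) (by rw [hc]; nlinarith) m
        have h3 : 2*(m:ℝ)+2 ≤ (4/3)*c := by rw [hc]; nlinarith
        have h4 := mul_le_mul h2 h3 (by positivity) (by positivity)
        have h5 : (0:ℝ) ≤ E^2 * (c/2) * c^(2*m+1) := by positivity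
        calc E^2 * (Real.sqrt m * Real.sqrt ((m:ℝ)+1)) * c^(2*m+1)
              * (((2*(m:ℝ))*(2*(m:ℝ)+2))^m * (2*(m:ℝ)+2))
            ≤ E^2 * (c/2) * c^(2*m+1) * (((2*(m:ℝ))*(2*(m:ℝ)+2))^m * (2*(m:ℝ)+2)) := by
              have h6 : (0:ℝ) ≤ (((2*(m:ℝ))*(2*(m:ℝ)+2))^m * (2*(m:ℝ)+2)) := by positivity
              have h7 := mul_le_mul_of_nonneg_right (mul_le_mul_of_nonneg_right
                (mul_le_mul_of_nonneg_left hprod (by positivity : (0:ℝ) ≤ E^2))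
                (by positivity : (0:ℝ) ≤ c^(2*m+1))) h6
              linarith [h7]
          _ ≤ E^2 * (c/2) * c^(2*m+1) * ((c^2)^m * ((4/3)*c)) :=
              mul_le_mul_of_nonneg_left h4 h5
    _ ≤ (3*π) * (1/3) * (2*c) * (c^(2*m+1))^2 := by
        have : E^2 * (c/2) * c^(2*m+1) * ((c^2)^m * ((4/3)*c))
            = E^2 * ((2/3) * (c^(2*m+1))^2 * c) := by
          rw [show ((c:ℝ)^2)^m = c^(2*m) by rw [← pow_mul, mul_comm]]
          ring
        rw [this]
        have h8 : (0:ℝ) ≤ (2/3) * (c^(2*m+1))^2 * c := by positivity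
        calc E^2 * ((2/3) * (c^(2*m+1))^2 * c) ≤ (3*π) * ((2/3) * (c^(2*m+1))^2 * c) :=
            mul_le_mul_of_nonneg_right e_sq_le_three_pi h8
          _ = (3*π) * (1/3) * (2*c) * (c^(2*m+1))^2 := by ring
    _ = (Real.sqrt π * Real.sqrt (2*(2*(m:ℝ)+1)) * c^(2*m+1))^2 := by
        rw [hc]
        linear_combination (-(2*(2*(m:ℝ)+1)) * ((2*(m:ℝ)+1)^(2*m+1))^2) * hsp
          - (Real.sqrt π^2 * ((2*(m:ℝ)+1)^(2*m+1))^2) * hsn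
    _ ≤ (((2*m+1).factorial:ℝ) * E^(2*m+1))^2 := by
        apply pow_le_pow_left₀ (by positivity)
        calc Real.sqrt π * Real.sqrt (2*(2*(m:ℝ)+1)) * c^(2*m+1)
            = Real.sqrt π * Real.sqrt (2*(2*(m:ℝ)+1)) * (2*(m:ℝ)+1)^(2*m+1) := by rw [hc]
          _ ≤ _ := hL
    _ = ((2*m+1).factorial:ℝ)^2 * E^(2*m+1) * E^(2*m+1) := by ring

lemma key_ineq (d : ℕ) (hd : 1 ≤ d) :
    (2:ℝ)^d * (d:ℝ)^d * ((d/2).factorial:ℝ) * ((d - d/2).factorial:ℝ)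
      ≤ ((d.factorial:ℝ))^2 * Real.exp 1 ^ d := by
  rcases Nat.even_or_odd d with ⟨m, rfl⟩ | ⟨m, rfl⟩
  · have hm : 1 ≤ m := by omega
    have h1 : (m+m)/2 = m := by omega
    have h2 : (m+m) - (m+m)/2 = m := by omega
    rw [h2, h1, show m+m = 2*m from by omega]
    have := key_even m hm
    have hc : ((2*m:ℕ):ℝ) = 2*(m:ℝ) := by push_cast; ring
    rw [hc]
    exact this
  · rcases Nat.eq_zero_or_pos m with rfl | hm
    · norm_num [Nat.factorial]
      have := Real.exp_one_gt_d9
      linarith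
    · have h1 : (2*m+1)/2 = m := by omega
      have h2 : (2*m+1) - (2*m+1)/2 = m+1 := by omega
      rw [h2, h1]
      have := key_odd m hm
      have hc : ((2*m+1:ℕ):ℝ) = 2*(m:ℝ)+1 := by push_cast; ring
      rw [hc]
      exact this

lemma gamma_key (d : ℕ) (hd : 1 ≤ d) :
    (2:ℝ)^d * (d:ℝ)^((d:ℝ)/2) * Real.Gamma ((d:ℝ)/2+1)
      ≤ (d.factorial:ℝ) * (2*Real.exp 1)^((d:ℝ)/2) := by
  have hdpos : (0:ℝ) < (d:ℝ) := by exact_mod_cast hd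
  have hGpos : (0:ℝ) < Real.Gamma ((d:ℝ)/2+1) := Real.Gamma_pos_of_pos (by positivity)
  have hA : (0:ℝ) ≤ (2:ℝ)^d * (d:ℝ)^((d:ℝ)/2) * Real.Gamma ((d:ℝ)/2+1) := by positivity
  have hB : (0:ℝ) ≤ (d.factorial:ℝ) * (2*Real.exp 1)^((d:ℝ)/2) := by positivity
  have hsq : ((2:ℝ)^d * (d:ℝ)^((d:ℝ)/2) * Real.Gamma ((d:ℝ)/2+1))^2
      ≤ ((d.factorial:ℝ) * (2*Real.exp 1)^((d:ℝ)/2))^2 := by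
    have hX : ((d:ℝ)^((d:ℝ)/2))^2 = (d:ℝ)^d := by
      rw [sq, ← Real.rpow_add hdpos]
      rw [show (d:ℝ)/2 + (d:ℝ)/2 = (d:ℝ) by ring, Real.rpow_natCast]
    have hY : ((2*Real.exp 1)^((d:ℝ)/2))^2 = (2*Real.exp 1)^d := by
      rw [sq, ← Real.rpow_add (by positivity)]
      rw [show (d:ℝ)/2 + (d:ℝ)/2 = (d:ℝ) by ring, Real.rpow_natCast]
    set a := d/2 with ha
    set b := d - d/2 with hb
    have hab : (a:ℝ) + (b:ℝ) = (d:ℝ) := by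
      have : a + b = d := by omega
      exact_mod_cast this
    have hmid : (d:ℝ)/2 + 1 = (((a:ℝ)+1) + ((b:ℝ)+1))/2 := by
      rw [← hab]; ring
    have hG2 : Real.Gamma ((d:ℝ)/2+1)^2 ≤ (a.factorial:ℝ) * b.factorial := by
      rw [hmid]; exact gamma_mid_sq_le a b
    have hk := key_ineq d hd
    calc ((2:ℝ)^d * (d:ℝ)^((d:ℝ)/2) * Real.Gamma ((d:ℝ)/2+1))^2
        = (2:ℝ)^d * ((2:ℝ)^d * ((d:ℝ)^((d:ℝ)/2))^2) * (Real.Gamma ((d:ℝ)/2+1)^2) := by ring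
      _ = (2:ℝ)^d * ((2:ℝ)^d * (d:ℝ)^d) * (Real.Gamma ((d:ℝ)/2+1)^2) := by rw [hX]
      _ ≤ (2:ℝ)^d * ((2:ℝ)^d * (d:ℝ)^d) * ((a.factorial:ℝ) * b.factorial) := by
          gcongr
      _ = (2:ℝ)^d * ((2:ℝ)^d * (d:ℝ)^d * (a.factorial:ℝ) * (b.factorial:ℝ)) := by ring
      _ ≤ (2:ℝ)^d * (((d.factorial:ℝ))^2 * Real.exp 1 ^ d) := by
          gcongr
      _ = ((d.factorial:ℝ))^2 * (2*Real.exp 1)^d := by rw [mul_pow]; ring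
      _ = ((d.factorial:ℝ) * (2*Real.exp 1)^((d:ℝ)/2))^2 := by rw [mul_pow (d.factorial:ℝ), hY, mul_pow]
  calc (2:ℝ)^d * (d:ℝ)^((d:ℝ)/2) * Real.Gamma ((d:ℝ)/2+1)
      = Real.sqrt (((2:ℝ)^d * (d:ℝ)^((d:ℝ)/2) * Real.Gamma ((d:ℝ)/2+1))^2) :=
        (Real.sqrt_sq hA).symm
    _ ≤ Real.sqrt (((d.factorial:ℝ) * (2*Real.exp 1)^((d:ℝ)/2))^2) := Real.sqrt_le_sqrt hsq
    _ = (d.factorial:ℝ) * (2*Real.exp 1)^((d:ℝ)/2) := Real.sqrt_sq hB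

lemma volB1 (d : ℕ) (hd : 1 ≤ d) :
    volume {x : EuclideanSpace ℝ (Fin d) | ∑ i, |x i| ≤ 1}
      = ENNReal.ofReal ((2:ℝ)^d / d.factorial) := by
  have : Nonempty (Fin d) := ⟨⟨0, hd⟩⟩
  have hmeas : MeasurableSet {x : Fin d → ℝ | ∑ i, |x i| ≤ 1} := by
    apply measurableSet_le
    · exact Finset.measurable_sum _ (fun i _ => (measurable_pi_apply i).abs)
    · exact measurable_const
  have htrans : volume {x : EuclideanSpace ℝ (Fin d) | ∑ i, |x i| ≤ 1}
      = volume {x : Fin d → ℝ | ∑ i, |x i| ≤ 1} := by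
    rw [← ((EuclideanSpace.volume_preserving_symm_measurableEquiv_toLp (Fin d))).measure_preimage
      hmeas.nullMeasurableSet]
    rfl
  have h := MeasureTheory.volume_sum_rpow_le (Fin d) (le_refl (1:ℝ)) 1
  simp only [Real.rpow_one, div_one, one_div_one] at h
  rw [htrans, h]
  simp only [Fintype.card_fin, ENNReal.ofReal_one, one_pow, one_mul]
  norm_num
  rw [Real.Gamma_nat_eq_factorial]

/-- The volume ratio R of the d-dimensional cross-polytope equals
(2^d d^{d/2}/d! · Γ(d/2+1)/π^{d/2})^{1/d} and is at most √(2e/π). -/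
theorem volume_ratio_cross_polytope
    (d : ℕ) (hd : 1 ≤ d) (B1 B2 : Set (EuclideanSpace ℝ (Fin d)))
    (hB1 : B1 = {x : EuclideanSpace ℝ (Fin d) | ∑ i, |x i| ≤ 1})
    (hB2 : B2 = Metric.closedBall (0 : EuclideanSpace ℝ (Fin d)) 1)
    (R : ℝ)
    (hR : R = ((volume (Real.sqrt d • B1)).toReal / (volume B2).toReal) ^ ((1 : ℝ) / d)) :
    R = (2 ^ d * (d : ℝ) ^ ((d : ℝ) / 2) / (d.factorial : ℝ) *
          (Real.Gamma ((d : ℝ) / 2 + 1) / Real.pi ^ ((d : ℝ) / 2))) ^ ((1 : ℝ) / d) ∧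
    R ≤ Real.sqrt (2 * Real.exp 1 / Real.pi) := by
  have hdpos : (0:ℝ) < (d:ℝ) := by exact_mod_cast hd
  have hGpos : (0:ℝ) < Real.Gamma ((d:ℝ)/2+1) := Real.Gamma_pos_of_pos (by positivity)
  have hfac : (0:ℝ) < (d.factorial:ℝ) := by exact_mod_cast d.factorial_pos
  have h1 : volume (Real.sqrt d • B1) = ENNReal.ofReal (Real.sqrt d ^ d * ((2:ℝ)^d / d.factorial)) := by
    rw [Measure.addHaar_smul_of_nonneg volume (Real.sqrt_nonneg _) B1,
      hB1, volB1 d hd, finrank_euclideanSpace, Fintype.card_fin,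
      ← ENNReal.ofReal_mul (by positivity)]
  haveI : Nonempty (Fin d) := ⟨⟨0, hd⟩⟩
  have h2 : volume B2 = ENNReal.ofReal (Real.sqrt π ^ d / Real.Gamma ((d:ℝ)/2+1)) := by
    rw [hB2, EuclideanSpace.volume_closedBall]
    simp [Fintype.card_fin]
  have ht1 : (volume (Real.sqrt d • B1)).toReal = Real.sqrt d ^ d * ((2:ℝ)^d / d.factorial) := by
    rw [h1, ENNReal.toReal_ofReal (by positivity)]
  have ht2 : (volume B2).toReal = Real.sqrt π ^ d / Real.Gamma ((d:ℝ)/2+1) := by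
    rw [h2, ENNReal.toReal_ofReal (div_nonneg (by positivity) hGpos.le)]
  have hsd : Real.sqrt (d:ℝ) ^ d = (d:ℝ)^((d:ℝ)/2) := by
    rw [Real.sqrt_eq_rpow, ← Real.rpow_natCast ((d:ℝ)^((1:ℝ)/2)) d,
      ← Real.rpow_mul hdpos.le]
    congr 1
    ring
  have hspi : Real.sqrt π ^ d = π^((d:ℝ)/2) := by
    rw [Real.sqrt_eq_rpow, ← Real.rpow_natCast (π^((1:ℝ)/2)) d,
      ← Real.rpow_mul Real.pi_pos.le]
    congr 1
    ring
  have hpipos : (0:ℝ) < π^((d:ℝ)/2) := Real.rpow_pos_of_pos Real.pi_pos _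
  set A : ℝ := 2 ^ d * (d : ℝ) ^ ((d : ℝ) / 2) / (d.factorial : ℝ) *
      (Real.Gamma ((d : ℝ) / 2 + 1) / Real.pi ^ ((d : ℝ) / 2)) with hA
  have hratio : Real.sqrt d ^ d * ((2:ℝ)^d / d.factorial)
      / (Real.sqrt π ^ d / Real.Gamma ((d:ℝ)/2+1)) = A := by
    rw [hsd, hspi, hA]
    field_simp
  have hRA : R = A ^ ((1:ℝ)/d) := by rw [hR, ht1, ht2, hratio]
  refine ⟨hRA, ?_⟩
  have hAnonneg : 0 ≤ A := by
    rw [hA]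
    have : (0:ℝ) ≤ (d:ℝ)^((d:ℝ)/2) := (Real.rpow_pos_of_pos hdpos _).le
    positivity
  have hAle : A ≤ (2*Real.exp 1/π)^((d:ℝ)/2) := by
    have hk := gamma_key d hd
    have hA' : A = (2:ℝ)^d * (d:ℝ)^((d:ℝ)/2) * Real.Gamma ((d:ℝ)/2+1)
        / ((d.factorial:ℝ) * π^((d:ℝ)/2)) := by
      rw [hA]; field_simp
    rw [hA', Real.div_rpow (by positivity) Real.pi_pos.le]
    calc (2:ℝ)^d * (d:ℝ)^((d:ℝ)/2) * Real.Gamma ((d:ℝ)/2+1) / ((d.factorial:ℝ) * π^((d:ℝ)/2))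
        ≤ (d.factorial:ℝ) * (2*Real.exp 1)^((d:ℝ)/2) / ((d.factorial:ℝ) * π^((d:ℝ)/2)) := by
          apply div_le_div_of_nonneg_right hk (by positivity)
      _ = (2*Real.exp 1)^((d:ℝ)/2) / π^((d:ℝ)/2) := by
          rw [mul_div_mul_left _ _ hfac.ne']
  have h3 : R ≤ ((2*Real.exp 1/π)^((d:ℝ)/2)) ^ ((1:ℝ)/d) := by
    rw [hRA]
    exact Real.rpow_le_rpow hAnonneg hAle (by positivity)
  calc R ≤ ((2*Real.exp 1/π)^((d:ℝ)/2)) ^ ((1:ℝ)/d) := h3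
    _ = (2*Real.exp 1/π) ^ ((1:ℝ)/2) := by
        rw [← Real.rpow_mul (by positivity : (0:ℝ) ≤ 2*Real.exp 1/π)]
        congr 1
        field_simp
    _ = Real.sqrt (2*Real.exp 1/π) := (Real.sqrt_eq_rpow _).symm
end

section
/- Suppose U is an orthogonal transformation of ℝ^d such that ‖x‖_2 ≤ (4R²/√d)(‖U^{-1}x‖_1 + ‖x‖_1) for all x ∈ ℝ^d, where R ≤ √(2e/π). Let V̄₊ = {e_1,...,e_d, Ue_1,...,Ue_d} ⊂ ℝ^d. Then every dominant subset of V̄₊ has size at least d/(2⁷R⁴) ≥ d/400. -/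
/-!
Test a dominant subset `S` against its witness `u` and put `v = U⁻¹ u`. Orthogonality makes the
inner products with `e_i` and `U e_i` the coordinates of `u` and `v`, so the whole configuration has
ℓ¹ mass `‖u‖₁ + ‖v‖₁` and ℓ² mass `2 ‖u‖₂²`. Cauchy–Schwarz on `S` bounds the square of half the
ℓ¹ mass by `|S| · 2 ‖u‖₂²`, while the Kašin inequality bounds it below by `d ‖u‖₂² / (64 R⁴)`.
-/

open Finset

theorem sq_sum_abs_le_four_mul_card_mul_sum_sq {ι : Type*} [Fintype ι] (f : ι → ℝ)
    (S : Finset ι) (hS : (1 / 2) * ∑ j, |f j| ≤ ∑ j ∈ S, |f j|) :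
    (∑ j, |f j|) ^ 2 ≤ 4 * #S * ∑ j, f j ^ 2 :=
  calc (∑ j, |f j|) ^ 2 ≤ (2 * ∑ j ∈ S, |f j|) ^ 2 := by
        gcongr
        linarith
    _ = 4 * (∑ j ∈ S, |f j|) ^ 2 := by ring
    _ ≤ 4 * (#S * ∑ j ∈ S, |f j| ^ 2) := by gcongr; exact sq_sum_le_card_mul_sum_sq
    _ ≤ 4 * (#S * ∑ j, f j ^ 2) := by
        simp only [sq_abs]
        gcongr 4 * (_ * ?_)
        exact sum_le_univ_sum_of_nonneg fun j => sq_nonneg (f j)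
    _ = 4 * #S * ∑ j, f j ^ 2 := by ring

theorem dotProduct_apply_eq_dotProduct_symm_apply {n R : Type*} [Fintype n]
    [CommSemiring R] (U : (n → R) ≃ₗ[R] (n → R)) (hU : ∀ x y, U x ⬝ᵥ U y = x ⬝ᵥ y)
    (x y : n → R) : U x ⬝ᵥ y = x ⬝ᵥ U.symm y := by
  simpa using hU x (U.symm y)

theorem mul_le_sq_mul_sq_of_sqrt_le_div_sqrt {d N a T : ℝ} (hd : 0 ≤ d) (hN : 0 ≤ N)
    (h : √N ≤ a / √d * T) : d * N ≤ a ^ 2 * T ^ 2 := by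
  rcases hd.eq_or_lt with rfl | hd
  · simp only [zero_mul]; positivity
  have hsd : 0 < √d := Real.sqrt_pos.2 hd
  have : √d * √N ≤ a * T := by
    calc √d * √N ≤ √d * (a / √d * T) := by gcongr
      _ = a * T := by field_simp
  calc d * N = (√d * √N) ^ 2 := by rw [mul_pow, Real.sq_sqrt hd.le, Real.sq_sqrt hN]
    _ ≤ (a * T) ^ 2 := by gcongr
    _ = a ^ 2 * T ^ 2 := mul_pow a T 2

theorem two_pow_seven_mul_pow_four_le_of_le_sqrt {R : ℝ} (hR0 : 0 ≤ R)
    (hR : R ≤ √(2 * Real.exp 1 / Real.pi)) : 2 ^ 7 * R ^ 4 ≤ 400 := by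
  have hR2 : R ^ 2 ≤ 2 * Real.exp 1 / Real.pi :=
    (Real.le_sqrt hR0 (by positivity)).1 hR
  have hconst : 2 ^ 7 * (2 * Real.exp 1 / Real.pi) ^ 2 ≤ 400 := by
    rw [div_pow, mul_div_assoc', div_le_iff₀ (by positivity)]
    nlinarith [Real.exp_one_lt_d9, Real.pi_gt_d6, Real.exp_pos 1]
  calc 2 ^ 7 * R ^ 4 = 2 ^ 7 * (R ^ 2) ^ 2 := by ring
    _ ≤ 2 ^ 7 * (2 * Real.exp 1 / Real.pi) ^ 2 := by gcongr
    _ ≤ 400 := hconst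

theorem kasin_configuration_dominant_subsets_large_general
    (d : ℕ) (U : (Fin d → ℝ) ≃ₗ[ℝ] (Fin d → ℝ))
    (hU : ∀ x y : Fin d → ℝ, ∑ i, U x i * U y i = ∑ i, x i * y i)
    (R : ℝ) (hR0 : 0 < R) (hRb : R ≤ Real.sqrt (2 * Real.exp 1 / Real.pi))
    (hK : ∀ x : Fin d → ℝ, Real.sqrt (∑ i, (x i) ^ 2) ≤
      (4 * R ^ 2 / Real.sqrt d) * ((∑ i, |U.symm x i|) + ∑ i, |x i|))
    (w : Fin d ⊕ Fin d → (Fin d → ℝ))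
    (hw1 : ∀ i, w (Sum.inl i) = Pi.single i 1)
    (hw2 : ∀ i, w (Sum.inr i) = U (Pi.single i 1)) :
    ∀ S : Finset (Fin d ⊕ Fin d),
      (∃ u : Fin d → ℝ, u ≠ 0 ∧
        (1 / 2) * ∑ j : Fin d ⊕ Fin d, |∑ l, w j l * u l| ≤ ∑ j ∈ S, |∑ l, w j l * u l|) →
      (d : ℝ) / (2 ^ 7 * R ^ 4) ≤ S.card ∧ (d : ℝ) / 400 ≤ (d : ℝ) / (2 ^ 7 * R ^ 4) := by
  rintro S ⟨u, hu0, hS⟩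
  set v := U.symm u
  have hcoord : ∀ j, ∑ l, w j l * u l = Sum.elim u v j := by
    rintro (i | i)
    · rw [hw1]; exact single_one_dotProduct i u
    · rw [hw2]
      exact (dotProduct_apply_eq_dotProduct_symm_apply U hU _ u).trans
        (single_one_dotProduct i v)
  have hnorm : ∑ i, v i ^ 2 = ∑ i, u i ^ 2 := by
    simpa [v, sq] using (hU v v).symm
  have hN : 0 < ∑ i, u i ^ 2 := by
    obtain ⟨i, hi⟩ := Function.ne_iff.1 hu0
    exact sum_pos' (fun j _ => sq_nonneg (u j)) ⟨i, mem_univ i, pow_two_pos_of_ne_zero hi⟩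
  simp only [hcoord] at hS
  have hdom := sq_sum_abs_le_four_mul_card_mul_sum_sq _ S hS
  simp only [Fintype.sum_sum_type, Sum.elim_inl, Sum.elim_inr, hnorm] at hdom
  have hkasin := mul_le_sq_mul_sq_of_sqrt_le_div_sqrt d.cast_nonneg hN.le (hK u)
  have hcard : (d : ℝ) ≤ #S * (2 ^ 7 * R ^ 4) := by
    refine le_of_mul_le_mul_right ?_ hN
    calc (d : ℝ) * ∑ i, u i ^ 2 ≤ (4 * R ^ 2) ^ 2 * (∑ i, |v i| + ∑ i, |u i|) ^ 2 := hkasin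
      _ = 16 * R ^ 4 * (∑ i, |u i| + ∑ i, |v i|) ^ 2 := by ring
      _ ≤ 16 * R ^ 4 * (4 * #S * (∑ i, u i ^ 2 + ∑ i, u i ^ 2)) := by gcongr
      _ = #S * (2 ^ 7 * R ^ 4) * ∑ i, u i ^ 2 := by ring
  refine ⟨(div_le_iff₀ (by positivity)).2 hcard, ?_⟩
  gcongr
  exact two_pow_seven_mul_pow_four_le_of_le_sqrt hR0.le hRb

/-- With a Kašin-type orthogonal transformation U, every dominant subset of
{e_1,...,e_d, Ue_1,...,Ue_d} has size at least d/(2⁷R⁴) ≥ d/400. -/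
theorem kasin_configuration_dominant_subsets_large
    (d : ℕ) (hd : 1 ≤ d) (U : (Fin d → ℝ) ≃ₗ[ℝ] (Fin d → ℝ))
    (hU : ∀ x y : Fin d → ℝ, ∑ i, U x i * U y i = ∑ i, x i * y i)
    (R : ℝ) (hR0 : 0 < R) (hRb : R ≤ Real.sqrt (2 * Real.exp 1 / Real.pi))
    (hK : ∀ x : Fin d → ℝ, Real.sqrt (∑ i, (x i) ^ 2) ≤
      (4 * R ^ 2 / Real.sqrt d) * ((∑ i, |U.symm x i|) + ∑ i, |x i|))
    (w : Fin d ⊕ Fin d → (Fin d → ℝ))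
    (hw1 : ∀ i, w (Sum.inl i) = Pi.single i 1)
    (hw2 : ∀ i, w (Sum.inr i) = U (Pi.single i 1)) :
    ∀ S : Finset (Fin d ⊕ Fin d),
      (∃ u : Fin d → ℝ, u ≠ 0 ∧
        (1 / 2) * ∑ j : Fin d ⊕ Fin d, |∑ l, w j l * u l| ≤ ∑ j ∈ S, |∑ l, w j l * u l|) →
      (d : ℝ) / (2 ^ 7 * R ^ 4) ≤ S.card ∧ (d : ℝ) / 400 ≤ (d : ℝ) / (2 ^ 7 * R ^ 4) :=
  kasin_configuration_dominant_subsets_large_general d U hU R hR0 hRb hK w hw1 hw2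
end
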